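/- arXiv:2102.09002 — 8 statements merged into one kernel-verified Lean document; each statement's English description precedes it below -/
import Mathlib

section
/- Let N be a node set of size n+1 with n ≥ 2, and let the random nomination profile x be drawn from an opinion poll distribution (each node independently draws its set of outgoing edges from an arbitrary distribution). Let j* ∈ N be a node maximizing the expected in-degree E[d_j(x)]. Then E[Δ(x)] ≤ E[d_{j*}(x)] + 3 + √(n·ln n); in particular, the constant mechanism that always returns j* has expected additive approximation E[Δ(x) − d_{j*}(x)] at most 3 + √(n·ln n). -/
open Finset

/-- In-degree of node `j` in the nomination profile `x` (no self-votes counted). -/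
def indeg {N : Type*} [Fintype N] [DecidableEq N] (x : N → N → Bool) (j : N) : ℕ :=
  ((Finset.univ.erase j).filter (fun i => x i j)).card

/-- The maximum in-degree `Δ(x)` of the nomination profile `x`. -/
def maxdeg {N : Type*} [Fintype N] [DecidableEq N] (x : N → N → Bool) : ℕ :=
  Finset.univ.sup (indeg x)

/-- Probability of the profile `x` in the opinion poll model, where node `i`
draws its row of outgoing edges according to the distribution `P i`. -/
noncomputable def oppWeight {N : Type*} [Fintype N] [DecidableEq N]
    (P : N → (N → Bool) → ℝ) (x : N → N → Bool) : ℝ :=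
  ∏ i, P i (x i)

/-!
Each in-degree `d_j` is a sum of independent `{0,1}`-valued votes, so Hoeffding's lemma bounds its
moment generating function by `exp (t 𝔼 d_j + (n+1) t² / 8) ≤ exp (t 𝔼 d_{j*} + (n+1) t² / 8)`.
By Jensen's inequality and a union bound over the `n + 1` nodes,
`exp (t 𝔼 Δ) ≤ 𝔼 exp (t Δ) ≤ ∑_j 𝔼 exp (t d_j)`; taking logarithms and optimising `t` gives
`𝔼 Δ ≤ 𝔼 d_{j*} + √((n+1) log (n+1) / 2)`, and the last term is at most `1 + √(n log n)`.
-/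

open Real MeasureTheory ProbabilityTheory

theorem sum_mul_exp_le_of_mem_Icc {α : Type*} [Fintype α] {w : α → ℝ} (hw0 : ∀ a, 0 ≤ w a)
    (hw1 : ∑ a, w a = 1) {X : α → ℝ} {lo hi : ℝ} (hX : ∀ a, X a ∈ Set.Icc lo hi) (t : ℝ) :
    ∑ a, w a * exp (t * X a) ≤ exp (t * ∑ a, w a * X a + (hi - lo) ^ 2 * t ^ 2 / 8) := by
  let _ : MeasurableSpace α := ⊤
  have _ : MeasurableSingletonClass α := ⟨fun _ => trivial⟩
  let μ : Measure α := ∑ a, ENNReal.ofReal (w a) • Measure.dirac a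
  have hμ : ∀ a, μ.real {a} = w a := fun a => by
    simp only [μ, Measure.real, Measure.coe_finsetSum, Finset.sum_apply, Measure.smul_apply,
      Measure.dirac_apply, Set.indicator, smul_eq_mul]
    rw [sum_eq_single a (fun b _ hb => by simp [hb]) (by simp)]
    simp [hw0]
  have _ : IsProbabilityMeasure μ := by
    constructor
    simp [μ, ← ENNReal.ofReal_sum_of_nonneg (fun a _ => hw0 a), hw1]
  have hint : ∀ f : α → ℝ, ∫ a, f a ∂μ = ∑ a, w a * f a := fun f => by
    simp [integral_fintype (hf := Integrable.of_finite), hμ]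
  have hoeffding := (hasSubgaussianMGF_of_mem_Icc (μ := μ) (X := X)
    measurable_from_top.aemeasurable (Filter.Eventually.of_forall hX)).mgf_le t
  have hc : (((‖hi - lo‖₊ / 2) ^ 2 : NNReal) : ℝ) = (hi - lo) ^ 2 / 4 := by
    simp only [div_pow, NNReal.coe_div, NNReal.coe_pow, coe_nnnorm, norm_eq_abs, sq_abs,
      NNReal.coe_ofNat]
    ring
  simp only [mgf, hint, hc] at hoeffding
  set m := ∑ a, w a * X a
  have hshift : ∑ a, w a * exp (t * X a) = exp (t * m) * ∑ a, w a * exp (t * (X a - m)) := by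
    rw [mul_sum]
    refine sum_congr rfl fun a _ => ?_
    rw [mul_sub, exp_sub]; field_simp
  rw [hshift, exp_add]
  gcongr
  exact hoeffding.trans_eq (by ring_nf)

theorem sum_mul_le_of_sum_mul_exp_le {Ω ι : Type*} [Fintype Ω] [Fintype ι] {w : Ω → ℝ}
    (hw0 : ∀ ω, 0 ≤ w ω) (hw1 : ∑ ω, w ω = 1) {Y : ι → Ω → ℝ} {M : Ω → ℝ}
    (hM : ∀ ω, ∃ j, M ω ≤ Y j ω) {t m c : ℝ} (ht : 0 < t)
    (hY : ∀ j, ∑ ω, w ω * exp (t * Y j ω) ≤ exp (t * m + c)) :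
    ∑ ω, w ω * M ω ≤ m + (log (Fintype.card ι) + c) / t := by
  have hjensen : exp (t * ∑ ω, w ω * M ω) ≤ ∑ ω, w ω * exp (t * M ω) := by
    simpa [mul_sum, mul_left_comm t] using
      convexOn_exp.map_sum_le (t := univ) (p := fun ω => t * M ω) (fun ω _ => hw0 ω) hw1
        (fun _ _ => Set.mem_univ _)
  have hunion : ∀ ω, exp (t * M ω) ≤ ∑ j, exp (t * Y j ω) := fun ω => by
    obtain ⟨j, hj⟩ := hM ω
    calc exp (t * M ω) ≤ exp (t * Y j ω) := by gcongr
      _ ≤ ∑ j, exp (t * Y j ω) :=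
        single_le_sum (f := fun j => exp (t * Y j ω)) (fun j _ => (exp_pos _).le) (mem_univ j)
  have hbound : exp (t * ∑ ω, w ω * M ω) ≤ Fintype.card ι * exp (t * m + c) :=
    calc exp (t * ∑ ω, w ω * M ω) ≤ ∑ ω, w ω * ∑ j, exp (t * Y j ω) :=
          hjensen.trans (sum_le_sum fun ω _ => by gcongr; exacts [hw0 ω, hunion ω])
      _ = ∑ j, ∑ ω, w ω * exp (t * Y j ω) := by simp only [mul_sum]; exact sum_comm
      _ ≤ ∑ _j : ι, exp (t * m + c) := sum_le_sum fun j _ => hY j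
      _ = Fintype.card ι * exp (t * m + c) := by simp
  have hcard : (0 : ℝ) < Fintype.card ι :=
    pos_of_mul_pos_left ((exp_pos _).trans_le hbound) (exp_pos _).le
  rw [← exp_log hcard, ← exp_add, exp_le_exp] at hbound
  rw [← sub_le_iff_le_add', le_div_iff₀ ht]
  linarith

theorem sum_mul_le_add_two_mul_sqrt {Ω ι : Type*} [Fintype Ω] [Fintype ι] {w : Ω → ℝ}
    (hw0 : ∀ ω, 0 ≤ w ω) (hw1 : ∑ ω, w ω = 1) {Y : ι → Ω → ℝ} {M : Ω → ℝ}
    (hM : ∀ ω, ∃ j, M ω ≤ Y j ω) (hι : 1 < Fintype.card ι) {m b : ℝ} (hb : 0 < b)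
    (hY : ∀ t, 0 < t → ∀ j, ∑ ω, w ω * exp (t * Y j ω) ≤ exp (t * m + b * t ^ 2)) :
    ∑ ω, w ω * M ω ≤ m + 2 * sqrt (b * log (Fintype.card ι)) := by
  set a := log (Fintype.card ι)
  have ha : 0 < a := log_pos (by exact_mod_cast hι)
  have ht : 0 < sqrt (a / b) := sqrt_pos.2 (div_pos ha hb)
  refine (sum_mul_le_of_sum_mul_exp_le hw0 hw1 hM ht (hY _ ht)).trans_eq ?_
  -- `t = √(a/b)` minimises `(a + b t²) / t`
  rw [sq_sqrt (div_pos ha hb).le, sqrt_div ha.le, sqrt_mul hb.le]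
  have hsa := sq_sqrt ha.le
  field_simp
  linear_combination (-2 * sqrt b) * hsa

section OpinionPoll

variable {N : Type*} [Fintype N] [DecidableEq N] {P : N → (N → Bool) → ℝ}

theorem sum_oppWeight_mul_prod (P : N → (N → Bool) → ℝ) (g : N → (N → Bool) → ℝ) :
    ∑ x, oppWeight P x * ∏ i, g i (x i) = ∏ i, ∑ f, P i f * g i f := by
  rw [Fintype.prod_sum]
  simp only [oppWeight, prod_mul_distrib]

theorem sum_oppWeight (hP1 : ∀ i, ∑ f, P i f = 1) : ∑ x, oppWeight P x = 1 := by
  simpa [hP1] using sum_oppWeight_mul_prod P fun _ _ => 1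

theorem sum_oppWeight_mul_apply (hP1 : ∀ i, ∑ f, P i f = 1) (i : N) (g : (N → Bool) → ℝ) :
    ∑ x, oppWeight P x * g (x i) = ∑ f, P i f * g f := by
  have h := sum_oppWeight_mul_prod P fun k f => if k = i then g f else 1
  simpa [prod_ite_eq', hP1] using h

theorem sum_oppWeight_mul_exp_sum_le (hP0 : ∀ i f, 0 ≤ P i f) (hP1 : ∀ i, ∑ f, P i f = 1)
    {h : N → (N → Bool) → ℝ} {lo hi : ℝ} (hh : ∀ i f, h i f ∈ Set.Icc lo hi) (t : ℝ) :
    ∑ x, oppWeight P x * exp (t * ∑ i, h i (x i))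
      ≤ exp (t * ∑ x, oppWeight P x * ∑ i, h i (x i)
          + Fintype.card N * ((hi - lo) ^ 2 * t ^ 2 / 8)) := by
  have hmean : ∑ x, oppWeight P x * ∑ i, h i (x i) = ∑ i, ∑ f, P i f * h i f := by
    simp only [mul_sum]
    rw [sum_comm]
    exact sum_congr rfl fun i _ => sum_oppWeight_mul_apply hP1 i (h i)
  calc ∑ x, oppWeight P x * exp (t * ∑ i, h i (x i))
      = ∏ i, ∑ f, P i f * exp (t * h i f) := by
        simp only [mul_sum, exp_sum]
        exact sum_oppWeight_mul_prod P fun i f => exp (t * h i f)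
    _ ≤ ∏ i, exp (t * ∑ f, P i f * h i f + (hi - lo) ^ 2 * t ^ 2 / 8) :=
        prod_le_prod (fun i _ => sum_nonneg fun f _ => mul_nonneg (hP0 i f) (exp_pos _).le)
          fun i _ => sum_mul_exp_le_of_mem_Icc (hP0 i) (hP1 i) (hh i) t
    _ = _ := by rw [← exp_sum, sum_add_distrib, ← mul_sum, hmean]; simp

theorem indeg_eq_sum (x : N → N → Bool) (j : N) :
    (indeg x j : ℝ) = ∑ i, if i ≠ j ∧ x i j = true then 1 else 0 := by
  rw [indeg, ← filter_ne', filter_filter, natCast_card_filter]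

theorem exists_indeg_eq_maxdeg [Nonempty N] (x : N → N → Bool) : ∃ j, indeg x j = maxdeg x := by
  obtain ⟨j, -, hj⟩ := exists_mem_eq_sup univ univ_nonempty (indeg x)
  exact ⟨j, hj.symm⟩

theorem sum_oppWeight_mul_exp_indeg_le (hP0 : ∀ i f, 0 ≤ P i f)
    (hP1 : ∀ i, ∑ f, P i f = 1) (j : N) (t : ℝ) :
    ∑ x, oppWeight P x * exp (t * indeg x j)
      ≤ exp (t * ∑ x, oppWeight P x * indeg x j + Fintype.card N / 8 * t ^ 2) := by
  have h := sum_oppWeight_mul_exp_sum_le hP0 hP1 (lo := 0) (hi := 1)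
    (h := fun i f => if i ≠ j ∧ f j = true then 1 else 0) (fun i f => by split_ifs <;> simp) t
  simp only [← indeg_eq_sum] at h
  exact h.trans_eq (by ring_nf)

end OpinionPoll

theorem two_mul_sqrt_succ_div_eight_mul_log_succ_le {n : ℕ} (hn : 1 ≤ n) :
    2 * sqrt ((n + 1) / 8 * log (n + 1)) ≤ 1 + sqrt (n * log n) := by
  have hn' : (1 : ℝ) ≤ n := by exact_mod_cast hn
  have hlog_succ : log (n + 1) ≤ log n + 1 / n := by
    have h := log_le_sub_one_of_pos (x := (n + 1) / n) (by positivity)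
    rw [log_div (by positivity) (by positivity)] at h
    have : ((n : ℝ) + 1) / n - 1 = 1 / n := by field_simp; ring
    linarith
  have hL : 0 ≤ log ((n : ℝ) + 1) := log_nonneg (by linarith)
  have hnlog : 0 ≤ n * log (n : ℝ) := mul_nonneg (by positivity) (log_nonneg hn')
  have hsq : (2 * sqrt ((n + 1) / 8 * log (n + 1))) ^ 2 = ((n : ℝ) + 1) / 2 * log (n + 1) := by
    rw [mul_pow, sq_sqrt (by positivity)]; ring
  refine le_of_pow_le_pow_left₀ two_ne_zero (by positivity) ?_
  rw [hsq]
  calc ((n : ℝ) + 1) / 2 * log (n + 1) ≤ n * log (n + 1) := by nlinarith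
    _ ≤ n * (log n + 1 / n) := by gcongr
    _ = n * log n + 1 := by field_simp
    _ ≤ (1 + sqrt (n * log n)) ^ 2 := by nlinarith [sq_sqrt hnlog, sqrt_nonneg (n * log (n : ℝ))]

theorem stmt_1_general (n : ℕ) (hn : 2 ≤ n) (P : Fin (n + 1) → (Fin (n + 1) → Bool) → ℝ)
    (hP0 : ∀ i f, 0 ≤ P i f)
    (hP1 : ∀ i, ∑ f : Fin (n + 1) → Bool, P i f = 1)
    (jstar : Fin (n + 1))
    (hjstar : ∀ j : Fin (n + 1),
      (∑ x : Fin (n + 1) → Fin (n + 1) → Bool, oppWeight P x * (indeg x j : ℝ))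
        ≤ ∑ x : Fin (n + 1) → Fin (n + 1) → Bool, oppWeight P x * (indeg x jstar : ℝ)) :
    ((∑ x : Fin (n + 1) → Fin (n + 1) → Bool, oppWeight P x * (maxdeg x : ℝ))
      ≤ (∑ x : Fin (n + 1) → Fin (n + 1) → Bool, oppWeight P x * (indeg x jstar : ℝ))
        + 3 + Real.sqrt (n * Real.log n)) ∧
    ((∑ x : Fin (n + 1) → Fin (n + 1) → Bool,
        oppWeight P x * ((maxdeg x : ℝ) - (indeg x jstar : ℝ)))
      ≤ 3 + Real.sqrt (n * Real.log n)) := by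
  have hw0 : ∀ x, 0 ≤ oppWeight P x := fun x => prod_nonneg fun i _ => hP0 i (x i)
  have hmax := sum_mul_le_add_two_mul_sqrt hw0 (sum_oppWeight hP1)
    (Y := fun j x => (indeg x j : ℝ)) (M := fun x => (maxdeg x : ℝ))
    (fun x => (exists_indeg_eq_maxdeg x).imp fun j hj => by rw [hj])
    (by simp only [Fintype.card_fin]; omega) (b := Fintype.card (Fin (n + 1)) / 8) (by positivity)
    fun t ht j => (sum_oppWeight_mul_exp_indeg_le hP0 hP1 j t).trans <| exp_le_exp.2 <| by
      gcongr; exact hjstar j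
  have hsqrt := two_mul_sqrt_succ_div_eight_mul_log_succ_le (n := n) (by omega)
  simp only [Fintype.card_fin, Nat.cast_add, Nat.cast_one] at hmax
  refine ⟨by linarith, ?_⟩
  simp only [mul_sub, sum_sub_distrib]
  linarith

/-- For opinion poll inputs on `n+1` nodes (`n ≥ 2`), if `j*` is a node of maximum
expected in-degree, then `E[Δ(x)] ≤ E[d_{j*}(x)] + 3 + √(n·ln n)`; in particular the
constant mechanism returning `j*` has expected additive approximation at most
`3 + √(n·ln n)`. -/
theorem stmt_1 (n : ℕ) (hn : 2 ≤ n) (P : Fin (n + 1) → (Fin (n + 1) → Bool) → ℝ)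
    (hP0 : ∀ i f, 0 ≤ P i f)
    (hP1 : ∀ i, ∑ f : Fin (n + 1) → Bool, P i f = 1)
    (hPself : ∀ i f, f i = true → P i f = 0)
    (jstar : Fin (n + 1))
    (hjstar : ∀ j : Fin (n + 1),
      (∑ x : Fin (n + 1) → Fin (n + 1) → Bool, oppWeight P x * (indeg x j : ℝ))
        ≤ ∑ x : Fin (n + 1) → Fin (n + 1) → Bool, oppWeight P x * (indeg x jstar : ℝ)) :
    ((∑ x : Fin (n + 1) → Fin (n + 1) → Bool, oppWeight P x * (maxdeg x : ℝ))
      ≤ (∑ x : Fin (n + 1) → Fin (n + 1) → Bool, oppWeight P x * (indeg x jstar : ℝ))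
        + 3 + Real.sqrt (n * Real.log n)) ∧
    ((∑ x : Fin (n + 1) → Fin (n + 1) → Bool,
        oppWeight P x * ((maxdeg x : ℝ) - (indeg x jstar : ℝ)))
      ≤ 3 + Real.sqrt (n * Real.log n)) :=
  stmt_1_general n hn P hP0 hP1 jstar hjstar
end

section
/- Let n ≥ 80 and consider the uniform model with popularity p = 1/2 on a node set of size n+1 (so the in-degrees of the n+1 nodes are independent Bin(n,1/2) random variables, each with expectation n/2). Then E[Δ(x)] ≥ n/2 + (1/6)√(n·ln n). Consequently, for any fixed node u*, the constant mechanism that always returns u* has expected additive approximation E[Δ(x) − d_{u*}(x)] ≥ (1/6)√(n·ln n). -/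
/-!
Fix a node `u` and the threshold `t = ⌈n/2⌉ + ⌈√(n ln n)/5⌉`. Pointwise,
`Δ - d_u ≥ (t - d_u)⁺ · [d_j ≥ t for some j ≠ u]`. The in-degrees are independent `Bin(n, 1/2)`
variables, so the expectation of the right-hand side factorises as
`E (t - d_u)⁺ · (1 - (1 - q)^n)` with `q = P(Bin(n, 1/2) ≥ t)`. The first factor is at least
`t - n/2 ≥ √(n ln n)/5`. For the second, the central binomial coefficient is at least
`2^n / (2√n)` and, for `k ≤ K < ⌈n/2⌉`,
`C(n, ⌈n/2⌉ + k) ≥ C(n, ⌈n/2⌉) · exp(-k(k+1)/(⌈n/2⌉ - K))`; with `K = t + 1 - ⌈n/2⌉` this gives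
`q ≥ 2/n`, hence `(1 - q)^n ≤ e⁻² ≤ 1/6`. So `E[Δ - d_u] ≥ √(n ln n)/6`, and adding
`E d_u = n/2` bounds `E Δ`.
-/

open Finset

/-- Probability of the profile `x` in the a priori popularity model with
popularities `p`: each edge `(i,j)` with `i ≠ j` is present independently with
probability `p j`, and self-loops are never present. -/
noncomputable def apWeight {N : Type*} [Fintype N] [DecidableEq N]
    (p : N → ℝ) (x : N → N → Bool) : ℝ :=
  ∏ i, ∏ j, if i = j then (if x i j then 0 else 1) else (if x i j then p j else 1 - p j)

open Polynomial Real

/-- `E g(X)` for `X ∼ Bin(n, p)`: the Bernstein basis evaluated at `p` is the binomial law. -/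
noncomputable def binomialExpect (n : ℕ) (p : ℝ) (g : ℕ → ℝ) : ℝ :=
  ∑ k ∈ range (n + 1), (bernsteinPolynomial ℝ n k).eval p * g k

section BinomialExpect

variable {n : ℕ} {p : ℝ}

lemma binomialExpect_const (c : ℝ) : binomialExpect n p (fun _ => c) = c := by
  rw [binomialExpect, ← sum_mul, ← eval_finsetSum, bernsteinPolynomial.sum, eval_one, one_mul]

lemma binomialExpect_id : binomialExpect n p (fun k => k) = n * p := by
  have h := congrArg (eval p) (bernsteinPolynomial.sum_smul (R := ℝ) n)
  simp only [nsmul_eq_mul, eval_finsetSum, eval_mul, eval_natCast, eval_X] at h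
  rw [binomialExpect, ← h]
  exact sum_congr rfl fun k _ => mul_comm _ _

lemma binomialExpect_sub (f g : ℕ → ℝ) :
    binomialExpect n p (fun k => f k - g k) = binomialExpect n p f - binomialExpect n p g := by
  simp only [binomialExpect, mul_sub, sum_sub_distrib]

lemma bernsteinPolynomial_eval_nonneg (hp₀ : 0 ≤ p) (hp₁ : p ≤ 1) (k : ℕ) :
    0 ≤ (bernsteinPolynomial ℝ n k).eval p := by
  have : 0 ≤ 1 - p := by linarith
  simp only [bernsteinPolynomial, eval_mul, eval_pow, eval_sub, eval_one, eval_X, eval_natCast]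
  positivity

lemma binomialExpect_mono (hp₀ : 0 ≤ p) (hp₁ : p ≤ 1) {f g : ℕ → ℝ} (hfg : ∀ k, f k ≤ g k) :
    binomialExpect n p f ≤ binomialExpect n p g :=
  sum_le_sum fun k _ =>
    mul_le_mul_of_nonneg_left (hfg k) (bernsteinPolynomial_eval_nonneg hp₀ hp₁ k)

lemma sub_mul_le_binomialExpect_posPart (hp₀ : 0 ≤ p) (hp₁ : p ≤ 1) (t : ℝ) :
    t - n * p ≤ binomialExpect n p (fun k => max (t - k) 0) := by
  calc t - n * p = binomialExpect n p (fun k => t - k) := by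
        rw [binomialExpect_sub, binomialExpect_const, binomialExpect_id]
    _ ≤ _ := binomialExpect_mono hp₀ hp₁ fun k => le_max_left _ _

lemma binomialExpect_half (g : ℕ → ℝ) :
    binomialExpect n (1 / 2) g = (1 / 2) ^ n * ∑ k ∈ range (n + 1), n.choose k * g k := by
  rw [binomialExpect, mul_sum]
  refine sum_congr rfl fun k hk => ?_
  have hk : k ≤ n := Nat.lt_succ_iff.1 (mem_range.1 hk)
  simp only [bernsteinPolynomial, eval_mul, eval_pow, eval_sub, eval_one, eval_X, eval_natCast]
  have hsplit : (1 / 2 : ℝ) ^ n = (1 / 2) ^ k * (1 / 2) ^ (n - k) := by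
    rw [← pow_add, Nat.add_sub_cancel' hk]
  rw [show (1 : ℝ) - 1 / 2 = 1 / 2 by norm_num, hsplit]
  ring

end BinomialExpect

section Profiles

variable {N : Type*} [Fintype N] [DecidableEq N] {n : ℕ}

noncomputable def voteWeight (p : N → ℝ) (i j : N) (b : Bool) : ℝ :=
  if i = j then (if b then 0 else 1) else (if b then p j else 1 - p j)

/-- The factor of `apWeight p x` coming from the column `c = fun i => x i j` of votes for `j`. -/
noncomputable def columnWeight (p : N → ℝ) (j : N) (c : N → Bool) : ℝ :=
  ∏ i, voteWeight p i j (c i)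

def columnDeg (j : N) (c : N → Bool) : ℕ :=
  ((univ.erase j).filter (fun i => c i)).card

lemma indeg_eq_columnDeg (x : N → N → Bool) (j : N) :
    indeg x j = columnDeg j (fun i => x i j) :=
  rfl

lemma apWeight_eq_prod_columnWeight (p : N → ℝ) (x : N → N → Bool) :
    apWeight p x = ∏ j, columnWeight p j (fun i => x i j) :=
  prod_comm

def boolFunEquivFinset : (N → Bool) ≃ Finset N where
  toFun c := univ.filter (fun i => c i)
  invFun S i := decide (i ∈ S)
  left_inv c := by ext i; simp
  right_inv S := by ext i; simp

lemma columnWeight_indicator (p : N → ℝ) {j : N} {S : Finset N} (hj : j ∉ S) :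
    columnWeight p j (fun i => decide (i ∈ S))
      = p j ^ S.card * (1 - p j) ^ ((univ.erase j).card - S.card) := by
  have hS : S ⊆ univ.erase j := subset_erase.2 ⟨subset_univ S, hj⟩
  have hin : (univ.erase j).filter (fun i => i ∈ S) = S := by
    rw [filter_mem_eq_inter, inter_eq_right.2 hS]
  have hout : (univ.erase j).filter (fun i => i ∉ S) = univ.erase j \ S := by
    ext i; simp [and_comm]
  rw [columnWeight, ← mul_prod_erase univ _ (mem_univ j)]
  simp only [voteWeight, decide_eq_true_eq, if_pos, hj, if_false]
  rw [prod_congr rfl fun i hi => if_neg (ne_of_mem_erase hi), prod_ite, prod_const, prod_const,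
    hin, hout, card_sdiff_of_subset hS, one_mul]

lemma columnWeight_eq_zero (p : N → ℝ) {j : N} {c : N → Bool} (hc : c j = true) :
    columnWeight p j c = 0 :=
  prod_eq_zero (mem_univ j) (by simp [voteWeight, hc])

lemma columnDeg_indicator {j : N} {S : Finset N} (hj : j ∉ S) :
    columnDeg j (fun i => decide (i ∈ S)) = S.card := by
  rw [columnDeg]
  congr 1
  simpa [filter_mem_eq_inter] using hj

lemma sum_columnWeight_mul_eq_binomialExpect (hN : Fintype.card N = n + 1) (p : N → ℝ) (j : N)
    (g : ℕ → ℝ) :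
    ∑ c, columnWeight p j c * g (columnDeg j c) = binomialExpect n (p j) g := by
  have hcard : (univ.erase j).card = n := by simp [card_erase_of_mem, hN]
  have hvoters : ∀ S ∈ (univ.erase j).powerset, j ∉ S :=
    fun S hS => (subset_erase.1 (mem_powerset.1 hS)).2
  rw [← boolFunEquivFinset.symm.sum_comp,
    ← sum_subset (subset_univ (univ.erase j).powerset) fun S _ hS => ?_]
  · rw [sum_congr rfl fun S hS => by
      rw [boolFunEquivFinset, Equiv.coe_fn_symm_mk, columnWeight_indicator p (hvoters S hS),
        columnDeg_indicator (hvoters S hS), hcard],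
      sum_powerset_apply_card (fun k => p j ^ k * (1 - p j) ^ (n - k) * g k), hcard,
      binomialExpect]
    refine sum_congr rfl fun k _ => ?_
    simp only [bernsteinPolynomial, eval_mul, eval_pow, eval_sub, eval_one, eval_X, eval_natCast,
      nsmul_eq_mul]
    ring
  · have hjS : j ∈ S := by
      by_contra hjS
      exact hS (mem_powerset.2 (subset_erase.2 ⟨subset_univ S, hjS⟩))
    rw [columnWeight_eq_zero p (by simpa [boolFunEquivFinset] using hjS), zero_mul]

lemma sum_apWeight_mul_prod_indeg (hN : Fintype.card N = n + 1) (p : N → ℝ)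
    (H : N → ℕ → ℝ) :
    ∑ x, apWeight p x * ∏ j, H j (indeg x j) = ∏ j, binomialExpect n (p j) (H j) := by
  simp_rw [apWeight_eq_prod_columnWeight, indeg_eq_columnDeg, ← prod_mul_distrib]
  rw [← (Equiv.piComm fun _ _ => Bool).sum_comp]
  calc _ = ∏ j, ∑ c, columnWeight p j c * H j (columnDeg j c) :=
        (Fintype.prod_sum fun j c => columnWeight p j c * H j (columnDeg j c)).symm
    _ = _ := prod_congr rfl fun j _ => sum_columnWeight_mul_eq_binomialExpect hN p j (H j)

lemma apWeight_nonneg {p : N → ℝ} (hp₀ : ∀ j, 0 ≤ p j) (hp₁ : ∀ j, p j ≤ 1)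
    (x : N → N → Bool) : 0 ≤ apWeight p x := by
  refine prod_nonneg fun i _ => prod_nonneg fun j _ => ?_
  have := hp₁ j
  split_ifs <;> linarith [hp₀ j]

lemma sum_apWeight_mul_indeg_mul_prod (hN : Fintype.card N = n + 1) (p : N → ℝ) (u : N)
    (F G : ℕ → ℝ) :
    ∑ x, apWeight p x * (F (indeg x u) * ∏ j ∈ univ.erase u, G (indeg x j))
      = binomialExpect n (p u) F * ∏ j ∈ univ.erase u, binomialExpect n (p j) G := by
  have hsplit : ∀ φ : N → (ℕ → ℝ) → ℝ,
      ∏ j, φ j (if j = u then F else G) = φ u F * ∏ j ∈ univ.erase u, φ j G := fun φ => by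
    rw [← mul_prod_erase univ _ (mem_univ u), if_pos rfl]
    exact congrArg _ (prod_congr rfl fun j hj => by rw [if_neg (ne_of_mem_erase hj)])
  rw [← hsplit fun j H => binomialExpect n (p j) H, ← sum_apWeight_mul_prod_indeg hN p]
  exact sum_congr rfl fun x _ => by rw [hsplit fun j H => H (indeg x j)]

lemma sum_apWeight_mul_indeg (hN : Fintype.card N = n + 1) (p : N → ℝ) (u : N) (g : ℕ → ℝ) :
    ∑ x, apWeight p x * g (indeg x u) = binomialExpect n (p u) g := by
  simpa [binomialExpect_const] using sum_apWeight_mul_indeg_mul_prod hN p u g fun _ => 1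

lemma indeg_le_maxdeg (x : N → N → Bool) (j : N) : indeg x j ≤ maxdeg x :=
  le_sup (mem_univ j)

lemma posPart_mul_one_sub_prod_le (x : N → N → Bool) (u : N) (t : ℕ) :
    max ((t : ℝ) - indeg x u) 0 * (1 - ∏ j ∈ univ.erase u, if indeg x j < t then 1 else 0)
      ≤ (maxdeg x : ℝ) - indeg x u := by
  have hu : (indeg x u : ℝ) ≤ maxdeg x := by exact_mod_cast indeg_le_maxdeg x u
  by_cases hhigh : ∃ j ∈ univ.erase u, t ≤ indeg x j
  · obtain ⟨j, hj, htj⟩ := hhigh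
    have ht : (t : ℝ) ≤ maxdeg x := by exact_mod_cast htj.trans (indeg_le_maxdeg x j)
    rw [prod_eq_zero hj (if_neg htj.not_gt), sub_zero, mul_one]
    exact max_le (by linarith) (by linarith)
  · simp only [not_exists, not_and, not_le] at hhigh
    rw [prod_eq_one fun j hj => if_pos (hhigh j hj), sub_self, mul_zero]
    linarith

lemma binomialExpect_mul_le_sum_apWeight_mul_maxdeg_sub (hN : Fintype.card N = n + 1)
    {p : N → ℝ} (hp₀ : ∀ j, 0 ≤ p j) (hp₁ : ∀ j, p j ≤ 1) (u : N) (t : ℕ) :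
    binomialExpect n (p u) (fun k => max ((t : ℝ) - k) 0) *
        (1 - ∏ j ∈ univ.erase u, binomialExpect n (p j) fun k => if k < t then 1 else 0)
      ≤ ∑ x, apWeight p x * ((maxdeg x : ℝ) - indeg x u) := by
  calc _ = ∑ x, apWeight p x * (max ((t : ℝ) - indeg x u) 0 *
          (1 - ∏ j ∈ univ.erase u, if indeg x j < t then 1 else 0)) := by
        rw [mul_one_sub, ← sum_apWeight_mul_indeg_mul_prod hN p u, ← sum_apWeight_mul_indeg hN p u,
          ← sum_sub_distrib]
        exact sum_congr rfl fun x _ => by ring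
    _ ≤ _ := sum_le_sum fun x _ => mul_le_mul_of_nonneg_left
        (posPart_mul_one_sub_prod_le x u t) (apWeight_nonneg hp₀ hp₁ x)

section Binomial

lemma sixteen_pow_le_mul_centralBinom_sq (m : ℕ) :
    16 ^ m ≤ (4 * m + 1) * m.centralBinom ^ 2 := by
  induction m with
  | zero => simp
  | succ m ih =>
    have hstep := Nat.succ_mul_centralBinom_succ m
    refine Nat.le_of_mul_le_mul_left ?_ (show 0 < (m + 1) ^ 2 by positivity)
    calc (m + 1) ^ 2 * 16 ^ (m + 1) = (m + 1) ^ 2 * 16 * 16 ^ m := by ring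
      _ ≤ (m + 1) ^ 2 * 16 * ((4 * m + 1) * m.centralBinom ^ 2) := by gcongr
      _ ≤ (4 * (m + 1) + 1) * (2 * (2 * m + 1) * m.centralBinom) ^ 2 := by
          nlinarith [Nat.zero_le (m.centralBinom ^ 2)]
      _ = (m + 1) ^ 2 * ((4 * (m + 1) + 1) * (m + 1).centralBinom ^ 2) := by
          rw [← hstep]; ring

lemma four_pow_le_mul_choose_half_sq {n : ℕ} (hn : 2 ≤ n) :
    4 ^ n ≤ 4 * n * n.choose ((n + 1) / 2) ^ 2 := by
  obtain ⟨m, rfl | rfl⟩ := Nat.even_or_odd' n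
  · have hhalf : (2 * m + 1) / 2 = m := by omega
    rw [hhalf, ← Nat.centralBinom_eq_two_mul_choose, pow_mul]
    calc (4 ^ 2) ^ m ≤ (4 * m + 1) * m.centralBinom ^ 2 := sixteen_pow_le_mul_centralBinom_sq m
      _ ≤ 4 * (2 * m) * m.centralBinom ^ 2 := by gcongr; omega
  · have hhalf : (2 * m + 1 + 1) / 2 = m + 1 := by omega
    have hodd : (m + 1) * (2 * m + 1).choose (m + 1) = (2 * m + 1) * m.centralBinom := by
      rw [Nat.centralBinom_eq_two_mul_choose, Nat.add_one_mul_choose_eq, mul_comm]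
    rw [hhalf]
    refine Nat.le_of_mul_le_mul_left ?_ (show 0 < (m + 1) ^ 2 by positivity)
    have h16 := sixteen_pow_le_mul_centralBinom_sq m
    calc (m + 1) ^ 2 * 4 ^ (2 * m + 1) = 4 * (m + 1) ^ 2 * 16 ^ m := by
          rw [show (16 : ℕ) = 4 ^ 2 by norm_num, ← pow_mul]; ring
      _ ≤ 4 * (m + 1) ^ 2 * ((4 * m + 1) * m.centralBinom ^ 2) := by gcongr
      _ ≤ 4 * (2 * m + 1) * ((2 * m + 1) * m.centralBinom) ^ 2 := by
          nlinarith [Nat.zero_le (m.centralBinom ^ 2)]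
      _ = (m + 1) ^ 2 * (4 * (2 * m + 1) * (2 * m + 1).choose (m + 1) ^ 2) := by
          rw [← hodd]; ring

lemma two_pow_le_mul_sqrt_mul_choose_half {n : ℕ} (hn : 2 ≤ n) :
    (2 : ℝ) ^ n ≤ 2 * √n * n.choose ((n + 1) / 2) := by
  refine le_of_pow_le_pow_left₀ two_ne_zero (by positivity) ?_
  rw [mul_pow, mul_pow, sq_sqrt n.cast_nonneg, ← pow_mul, mul_comm n 2, pow_mul]
  exact_mod_cast (four_pow_le_mul_choose_half_sq hn).trans_eq (by ring)

lemma exp_neg_two_mul_div_sub_le {a b : ℝ} (hb : 0 ≤ b) (hba : b < a) :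
    exp (-(2 * b / (a - b))) ≤ (a - b) / (a + b) := by
  have hab : 0 < a - b := sub_pos.2 hba
  have hapb : 0 < a + b := by linarith
  rw [exp_neg, show (a - b) / (a + b) = (2 * b / (a - b) + 1)⁻¹ by field_simp; ring]
  exact inv_anti₀ (by positivity) (add_one_le_exp _)

lemma choose_mul_div_le_choose_succ {n M k : ℕ} (hM : 2 * M ≤ n + 1) (hk : M + k ≤ n) :
    (n.choose (M + k) : ℝ) * ((M - (k + 1)) / (M + (k + 1))) ≤ n.choose (M + k + 1) := by
  have hrec : (n.choose (M + k + 1) : ℝ) * (M + k + 1) = n.choose (M + k) * (n - (M + k)) := by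
    have h := congrArg (Nat.cast : ℕ → ℝ) (Nat.choose_succ_right_eq n (M + k))
    push_cast [hk] at h
    exact h
  have hM' : (2 * M : ℝ) ≤ n + 1 := by exact_mod_cast hM
  rw [← eq_div_iff (by positivity)] at hrec
  rw [hrec, mul_div_assoc, ← add_assoc]
  refine mul_le_mul_of_nonneg_left (div_le_div_of_nonneg_right ?_ (by positivity)) (by positivity)
  linarith

lemma choose_mul_exp_le_choose_add {n M K k : ℕ} (hM : 2 * M ≤ n + 1) (hK : K < M) (hk : k ≤ K) :
    (n.choose M : ℝ) * exp (-(k * (k + 1) / (M - K))) ≤ n.choose (M + k) := by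
  have hKM : (K : ℝ) < M := by exact_mod_cast hK
  induction k with
  | zero => simp
  | succ k ih =>
    have hkK : (k : ℝ) + 1 ≤ K := by exact_mod_cast hk
    have hMK : 0 < (M : ℝ) - K := by linarith
    calc (n.choose M : ℝ) * exp (-(↑(k + 1) * (↑(k + 1) + 1) / (M - K)))
        = n.choose M * exp (-(k * (k + 1) / (M - K))) * exp (-(2 * (k + 1) / (M - K))) := by
          rw [mul_assoc, ← exp_add]; push_cast; ring_nf
      _ ≤ n.choose (M + k) * exp (-(2 * (k + 1) / (M - (k + 1)))) := by
          gcongr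
          exact ih (by omega)
      _ ≤ n.choose (M + k) * ((M - (k + 1)) / (M + (k + 1))) := by
          gcongr
          exact exp_neg_two_mul_div_sub_le (by positivity) (by linarith)
      _ ≤ n.choose (M + (k + 1)) := choose_mul_div_le_choose_succ hM (by omega)

lemma choose_mul_exp_le_choose_add_of_le {n M K k : ℕ} (hM : 2 * M ≤ n + 1) (hK : K < M)
    (hk : k ≤ K) : (n.choose M : ℝ) * exp (-(K * (K + 1) / (M - K))) ≤ n.choose (M + k) := by
  have hKM : (K : ℝ) < M := by exact_mod_cast hK
  refine le_trans ?_ (choose_mul_exp_le_choose_add hM hK hk)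
  gcongr

end Binomial

section Numerics

lemma log_le_div_four {x : ℝ} (hx : 64 ≤ x) : log x ≤ x / 4 := by
  have hr : 8 ≤ √x := by
    rw [show (8 : ℝ) = √64 by rw [show (64 : ℝ) = 8 ^ 2 by norm_num, sqrt_sq (by norm_num)]]
    exact sqrt_le_sqrt hx
  have hsq : √x * √x = x := mul_self_sqrt (by linarith)
  have hlog : log √x ≤ √x - 1 := log_le_sub_one_of_pos (by linarith)
  rw [log_sqrt (by linarith)] at hlog
  nlinarith

lemma sqrt_mul_log_le_half {x : ℝ} (hx : 64 ≤ x) : √(x * log x) ≤ x / 2 := by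
  rw [show x / 2 = √((x / 2) ^ 2) from (sqrt_sq (by linarith)).symm]
  exact sqrt_le_sqrt (by nlinarith [log_le_div_four hx])

lemma six_mul_log_two_le_log {x : ℝ} (hx : 64 ≤ x) : 6 * log 2 ≤ log x := by
  rw [show 6 * log 2 = log (2 ^ 6) by rw [log_pow]; norm_num]
  exact log_le_log (by norm_num) (by norm_num; linarith)

lemma mul_add_one_div_sub_le_log_sqrt_sub_log_two {x M K : ℝ} (hx : 80 ≤ x) (hM : x / 2 ≤ M)
    (hK₀ : 0 ≤ K) (hK : K ≤ √(x * log x) / 5 + 2) :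
    K * (K + 1) / (M - K) ≤ log √x - log 2 := by
  set L := log x
  set s := √(x * L)
  have hL : 4.158 ≤ L := by
    linarith [six_mul_log_two_le_log (x := x) (by linarith), log_two_gt_d9]
  have hs2 : s ^ 2 = x * L := sq_sqrt (by positivity)
  have hs : s ≤ x / 2 := sqrt_mul_log_le_half (by linarith)
  have hs18 : 18 ≤ s := by nlinarith [sqrt_nonneg (x * L)]
  have hMK : 3 / 8 * x ≤ M - K := by linarith
  rw [log_sqrt (by linarith), div_le_iff₀ (by linarith)]
  calc K * (K + 1) ≤ (s / 5 + 2) * (s / 5 + 3) := by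
        exact mul_le_mul hK (by linarith) (by linarith) (by positivity)
    _ ≤ (L / 2 - 0.6932) * (3 / 8 * x) := by nlinarith
    _ ≤ (L / 2 - log 2) * (M - K) := by gcongr <;> linarith [log_two_lt_d9]

lemma pow_le_one_div_six {y : ℝ} {n : ℕ} (hn : 2 ≤ n) (hy₀ : 0 ≤ y) (hy : y ≤ 1 - 2 / n) :
    y ^ n ≤ 1 / 6 := by
  have he : exp 1 * exp 1 ≥ 6 := by nlinarith [exp_one_gt_d9]
  calc y ^ n ≤ (1 - 2 / n) ^ n := pow_le_pow_left₀ hy₀ hy n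
    _ ≤ exp (-2) := one_sub_div_pow_le_exp_neg (by exact_mod_cast hn)
    _ ≤ 1 / 6 := by
        rw [exp_neg, show (2 : ℝ) = 1 + 1 by norm_num, exp_add, one_div]
        exact inv_anti₀ (by norm_num) he

end Numerics

section TailBound

noncomputable def threshold (n : ℕ) : ℕ := (n + 1) / 2 + ⌈√(n * log n) / 5⌉₊

variable {n : ℕ}

lemma sqrt_mul_log_div_five_le_threshold_sub (n : ℕ) :
    √(n * log n) / 5 ≤ threshold n - n / 2 := by
  have hceil := Nat.le_ceil (√(n * log n) / 5)
  have hhalf : (n : ℝ) ≤ 2 * ((n + 1) / 2 : ℕ) := by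
    exact_mod_cast (by omega : n ≤ 2 * ((n + 1) / 2))
  rw [threshold]
  push_cast
  linarith

lemma threshold_add_one_le (hn : 80 ≤ n) : threshold n + 1 ≤ n := by
  have hx : (80 : ℝ) ≤ n := by exact_mod_cast hn
  have hs := sqrt_mul_log_le_half (x := n) (by linarith)
  have hceil := Nat.ceil_lt_add_one (by positivity : 0 ≤ √(n * log n) / 5)
  have hhalf : (((n + 1) / 2 : ℕ) : ℝ) ≤ (n + 1) / 2 := by
    rw [le_div_iff₀ two_pos]; exact_mod_cast (by omega : (n + 1) / 2 * 2 ≤ n + 1)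
  have : (threshold n : ℝ) < n := by rw [threshold]; push_cast; linarith
  exact_mod_cast this

lemma two_div_le_choose_threshold (hn : 80 ≤ n) :
    2 / n ≤ (1 / 2) ^ n * (n.choose (threshold n) + n.choose (threshold n + 1) : ℝ) := by
  set s := √(n * log n)
  set a := ⌈s / 5⌉₊
  set M := (n + 1) / 2
  have hx : (80 : ℝ) ≤ n := by exact_mod_cast hn
  have hs : s ≤ n / 2 := sqrt_mul_log_le_half (by linarith)
  have ha : (a : ℝ) < s / 5 + 1 := Nat.ceil_lt_add_one (by positivity)
  have hM : 2 * M ≤ n + 1 := by omega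
  have hMx : (n : ℝ) / 2 ≤ M := by
    rw [div_le_iff₀ two_pos]; exact_mod_cast (by omega : n ≤ M * 2)
  have hKM : a + 1 < M := by
    have : ((a + 1 : ℕ) : ℝ) < M := by push_cast; linarith
    exact_mod_cast this
  set E := exp (-((a + 1 : ℕ) * ((a + 1 : ℕ) + 1) / (M - (a + 1 : ℕ)) : ℝ))
  have hE : 2 / √n ≤ E := by
    have hX := mul_add_one_div_sub_le_log_sqrt_sub_log_two hx hMx (Nat.cast_nonneg (a + 1))
      (by push_cast; linarith)
    calc 2 / √n = exp (-(log √n - log 2)) := by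
          rw [exp_neg, exp_sub, exp_log (by positivity), exp_log two_pos, inv_div]
      _ ≤ E := exp_le_exp.2 (neg_le_neg hX)
  have hCa : (n.choose M : ℝ) * E ≤ n.choose (threshold n) :=
    choose_mul_exp_le_choose_add_of_le hM hKM (Nat.le_succ a)
  have hCK : (n.choose M : ℝ) * E ≤ n.choose (threshold n + 1) :=
    choose_mul_exp_le_choose_add_of_le hM hKM le_rfl
  have hcentral : (2 : ℝ) ^ n / (2 * √n) ≤ n.choose M := by
    rw [div_le_iff₀ (by positivity), mul_comm]
    exact two_pow_le_mul_sqrt_mul_choose_half (by omega)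
  have hsq : √n * √n = n := mul_self_sqrt n.cast_nonneg
  calc 2 / (n : ℝ) = (1 / 2) ^ n * (2 * ((2 : ℝ) ^ n / (2 * √n)) * (2 / √n)) := by
        rw [show (1 / 2 : ℝ) ^ n * (2 * (2 ^ n / (2 * √n)) * (2 / √n))
            = ((1 / 2) ^ n * 2 ^ n) * 2 / (√n * √n) by ring, ← mul_pow, hsq]
        norm_num
    _ ≤ (1 / 2) ^ n * (2 * n.choose M * E) := by gcongr
    _ ≤ _ := by gcongr; linarith

lemma binomialExpect_half_lt_le {t : ℕ} (ht : t + 1 ≤ n) :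
    binomialExpect n (1 / 2) (fun k => if k < t then 1 else 0)
      ≤ 1 - (1 / 2) ^ n * (n.choose t + n.choose (t + 1) : ℝ) := by
  have hcompl := binomialExpect_sub (n := n) (p := 1 / 2) (fun _ => 1)
    fun k => if k < t then 1 else 0
  rw [binomialExpect_const, binomialExpect_half] at hcompl
  have hpair : ({t, t + 1} : Finset ℕ) ⊆ range (n + 1) := by
    intro k hk
    simp only [mem_insert, mem_singleton] at hk
    simp only [mem_range]
    omega
  have htail : (n.choose t + n.choose (t + 1) : ℝ)
      ≤ ∑ k ∈ range (n + 1), (n.choose k : ℝ) * (1 - if k < t then 1 else 0) := by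
    refine le_trans (le_of_eq ?_) (sum_le_sum_of_subset_of_nonneg hpair fun k _ _ => ?_)
    · simp [sum_pair (by omega : t ≠ t + 1)]
    · split_ifs <;> norm_num
  nlinarith [pow_pos (by norm_num : (0 : ℝ) < 1 / 2) n]

lemma binomialExpect_half_lt_threshold_le (hn : 80 ≤ n) :
    binomialExpect n (1 / 2) (fun k => if k < threshold n then 1 else 0) ≤ 1 - 2 / n :=
  (binomialExpect_half_lt_le (threshold_add_one_le hn)).trans
    (by linarith [two_div_le_choose_threshold hn])

end TailBound

lemma sqrt_mul_log_div_six_le_sum_apWeight_mul_maxdeg_sub {N : Type*} [Fintype N]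
    [DecidableEq N] {n : ℕ} (hN : Fintype.card N = n + 1) (hn : 80 ≤ n) (u : N) :
    1 / 6 * √(n * log n) ≤ ∑ x, apWeight (fun _ => 1 / 2) x * ((maxdeg x : ℝ) - indeg x u) := by
  set t := threshold n
  have hmean : √(n * log n) / 5 ≤ binomialExpect n (1 / 2) fun k => max ((t : ℝ) - k) 0 :=
    (sqrt_mul_log_div_five_le_threshold_sub n).trans
      ((le_of_eq (by ring)).trans (sub_mul_le_binomialExpect_posPart (by norm_num) (by norm_num) t))
  have hlow₀ : 0 ≤ binomialExpect n (1 / 2) fun k => if k < t then 1 else 0 := by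
    refine (binomialExpect_const 0).symm.trans_le
      (binomialExpect_mono (by norm_num) (by norm_num) fun k => ?_)
    split_ifs <;> norm_num
  have hprod : ∏ j ∈ univ.erase u, (binomialExpect n (1 / 2) fun k => if k < t then 1 else 0)
      ≤ 1 / 6 := by
    rw [prod_const, card_erase_of_mem (mem_univ u), card_univ, hN, Nat.add_sub_cancel]
    exact pow_le_one_div_six (by omega) hlow₀ (binomialExpect_half_lt_threshold_le hn)
  calc 1 / 6 * √(n * log n) = √(n * log n) / 5 * (5 / 6) := by ring
    _ ≤ (binomialExpect n (1 / 2) fun k => max ((t : ℝ) - k) 0) *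
          (1 - ∏ j ∈ univ.erase u, binomialExpect n (1 / 2) fun k => if k < t then 1 else 0) :=
        mul_le_mul hmean (by linarith) (by norm_num) ((by positivity : (0 : ℝ) ≤ _).trans hmean)
    _ ≤ _ := binomialExpect_mul_le_sum_apWeight_mul_maxdeg_sub (p := fun _ => 1 / 2) hN
        (fun _ => by norm_num) (fun _ => by norm_num) u t

/-- In the uniform model with `p = 1/2` on `n+1` nodes (`n ≥ 80`),
`E[Δ(x)] ≥ n/2 + (1/6)√(n·ln n)`; consequently every constant mechanism
(returning a fixed node `u*`) has expected additive approximation at least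
`(1/6)√(n·ln n)`. -/
theorem stmt_2 (n : ℕ) (hn : 80 ≤ n) :
    ((∑ x : Fin (n + 1) → Fin (n + 1) → Bool,
        apWeight (fun _ => (1 / 2 : ℝ)) x * (maxdeg x : ℝ))
      ≥ (n : ℝ) / 2 + (1 / 6) * Real.sqrt (n * Real.log n)) ∧
    (∀ ustar : Fin (n + 1),
      (∑ x : Fin (n + 1) → Fin (n + 1) → Bool,
          apWeight (fun _ => (1 / 2 : ℝ)) x * ((maxdeg x : ℝ) - (indeg x ustar : ℝ)))
        ≥ (1 / 6) * Real.sqrt (n * Real.log n)) := by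
  have hgap := sqrt_mul_log_div_six_le_sum_apWeight_mul_maxdeg_sub (Fintype.card_fin (n + 1)) hn
  refine ⟨?_, hgap⟩
  have hmean := sum_apWeight_mul_indeg (Fintype.card_fin (n + 1)) (fun _ => 1 / 2) 0 fun k => k
  rw [binomialExpect_id] at hmean
  calc (n : ℝ) / 2 + 1 / 6 * √(n * log n)
      ≤ ∑ x : Fin (n + 1) → Fin (n + 1) → Bool, apWeight (fun _ => 1 / 2) x * (indeg x 0 : ℝ)
        + ∑ x : Fin (n + 1) → Fin (n + 1) → Bool,
          apWeight (fun _ => 1 / 2) x * ((maxdeg x : ℝ) - indeg x 0) := by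
        rw [hmean]; linarith [hgap 0]
    _ = _ := by rw [← sum_add_distrib]; exact sum_congr rfl fun x _ => by ring
end Profiles
end

section
/- The AVD mechanism is impartial: for every choice of default node t, every node i, every nomination profile x, and every alternative set x'_i of outgoing edges of node i, the AVD winner on x equals i if and only if the AVD winner on the profile (x'_i, x_{−i}) obtained from x by replacing i's outgoing edges with x'_i equals i. -/
open Finset

/-- `deg x S j` is the in-degree of node `j` counting only incoming edges from
nodes in the set `S`, given the nomination profile `x`. -/
def deg {N : Type*} [Fintype N] [DecidableEq N] (x : N → N → Bool) (S : Finset N) (j : N) : ℕ :=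
  (S.filter (fun i => x i j)).card

/-- `beats x t a b` : node `a` beats node `b` (with default node `t`).
For two non-default nodes, incoming edges from `a`, `b` and `t` are ignored;
for a comparison involving the default node `t`, edges from the two compared
nodes are ignored. -/
def beats {N : Type*} [Fintype N] [DecidableEq N] (x : N → N → Bool) (t a b : N) : Prop :=
  if b = t then deg x (Finset.univ \ {a, t}) a > deg x (Finset.univ \ {a, t}) t
  else if a = t then deg x (Finset.univ \ {b, t}) t > deg x (Finset.univ \ {b, t}) b
  else deg x (Finset.univ \ {a, b, t}) a > deg x (Finset.univ \ {a, b, t}) b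

/-- `a` beats every other node. -/
def beatsAll {N : Type*} [Fintype N] [DecidableEq N] (x : N → N → Bool) (t a : N) : Prop :=
  ∀ b, b ≠ a → beats x t a b

open Classical in
/-- The approval voting with default (AVD) mechanism with default node `t`:
the winner is the node beating every other node if it exists, else `t`. -/
noncomputable def avdWinner {N : Type*} [Fintype N] [DecidableEq N]
    (x : N → N → Bool) (t : N) : N :=
  if h : ∃ a, beatsAll x t a then h.choose else t

lemma deg_update {N : Type*} [Fintype N] [DecidableEq N]
    (x : N → N → Bool) (i : N) (x' : N → Bool) (S : Finset N) (j : N) (h : i ∉ S) :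
    deg (Function.update x i x') S j = deg x S j := by
  unfold deg
  congr 1
  apply Finset.filter_congr
  intro a ha
  have hai : a ≠ i := fun e => h (e ▸ ha)
  simp [Function.update_of_ne hai]

lemma beats_update {N : Type*} [Fintype N] [DecidableEq N]
    (x : N → N → Bool) (i : N) (x' : N → Bool) (t a b : N) (h : a = i ∨ t = i) :
    beats (Function.update x i x') t a b ↔ beats x t a b := by
  unfold beats
  split_ifs with h1 h2
  · rw [deg_update, deg_update] <;> · simp only [Finset.mem_sdiff, Finset.mem_insert,
      Finset.mem_singleton, not_and, not_not]; intro _; tauto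
  · rw [deg_update, deg_update] <;> · simp only [Finset.mem_sdiff, Finset.mem_insert,
      Finset.mem_singleton, not_and, not_not]; intro _; rcases h with h | h <;> simp [h2 ▸ h, h]
  · rw [deg_update, deg_update] <;> · simp only [Finset.mem_sdiff, Finset.mem_insert,
      Finset.mem_singleton, not_and, not_not]; intro _; tauto

lemma beats_asymm {N : Type*} [Fintype N] [DecidableEq N]
    (x : N → N → Bool) (t a b : N) (hab : a ≠ b)
    (h1 : beats x t a b) (h2 : beats x t b a) : False := by
  unfold beats at h1 h2
  by_cases hb : b = t
  · subst hb
    simp [hab, (Ne.symm hab)] at h1 h2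
    omega
  · by_cases ha : a = t
    · subst ha
      simp [hab, Ne.symm hab, hb] at h1 h2
      omega
    · simp [ha, hb] at h1 h2
      have hset : ({a, b, t} : Finset N) = {b, a, t} := by
        ext y; simp; tauto
      rw [hset] at h1
      omega

lemma beatsAll_unique {N : Type*} [Fintype N] [DecidableEq N]
    (x : N → N → Bool) (t a b : N) (ha : beatsAll x t a) (hb : beatsAll x t b) : a = b := by
  by_contra hne
  exact beats_asymm x t a b hne (ha b (Ne.symm hne)) (hb a hne)

open Classical in
lemma avdWinner_eq_iff {N : Type*} [Fintype N] [DecidableEq N]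
    (x : N → N → Bool) (t i : N) :
    avdWinner x t = i ↔ beatsAll x t i ∨ (i = t ∧ ¬∃ a, beatsAll x t a) := by
  unfold avdWinner
  split_ifs with h
  · constructor
    · rintro rfl
      exact Or.inl h.choose_spec
    · rintro (hi | ⟨rfl, hn⟩)
      · exact beatsAll_unique x t _ i h.choose_spec hi
      · exact absurd h hn
  · constructor
    · rintro rfl
      exact Or.inr ⟨rfl, h⟩
    · rintro (hi | ⟨rfl, _⟩)
      · exact absurd ⟨i, hi⟩ h
      · rfl

/-- Impartiality of AVD: for every default node `t`, node `i`, profile `x` and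
alternative set `x'` of outgoing edges of `i`, the AVD winner on `x` equals `i`
iff the AVD winner on the profile obtained by replacing `i`'s outgoing edges
with `x'` equals `i`. -/
theorem stmt_3 {N : Type*} [Fintype N] [DecidableEq N]
    (x : N → N → Bool) (t i : N) (x' : N → Bool) :
    avdWinner x t = i ↔ avdWinner (Function.update x i x') t = i := by
  rw [avdWinner_eq_iff, avdWinner_eq_iff]
  have hbi : beatsAll (Function.update x i x') t i ↔ beatsAll x t i := by
    constructor <;> intro h b hb <;>
      [exact (beats_update x i x' t i b (Or.inl rfl)).mp (h b hb);
       exact (beats_update x i x' t i b (Or.inl rfl)).mpr (h b hb)]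
  by_cases hti : i = t
  · subst hti
    have hall : ∀ a, beatsAll (Function.update x i x') i a ↔ beatsAll x i a := by
      intro a
      constructor <;> intro h b hb <;>
        [exact (beats_update x i x' i a b (Or.inr rfl)).mp (h b hb);
         exact (beats_update x i x' i a b (Or.inr rfl)).mpr (h b hb)]
    simp only [hbi, exists_congr hall]
  · simp only [hbi, hti, false_and, or_false]
end

section
/- Let n ≥ 10^6 and let d_t ~ Bin(n, p_t) with μ_t = p_t·n and ξ_t = min(μ_t, n−μ_t) ≥ 8200·ln n. Then the boundaries of the comfort zone Z_t satisfy U_t ≤ μ_t + 4√(ξ_t·ln n) and L_t ≥ μ_t − 4√(ξ_t·ln n). -/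
/-- The probability mass function of the binomial distribution `Bin(n, p)`:
`Pr[B = k] = C(n,k) p^k (1-p)^(n-k)`. -/
noncomputable def binomPMF (n : ℕ) (p : ℝ) (k : ℕ) : ℝ :=
  (n.choose k : ℝ) * p ^ k * (1 - p) ^ (n - k)

/-- `Pr[B > c]` for `B ~ Bin(n, p)`. -/
noncomputable def prGT (n : ℕ) (p : ℝ) (c : ℕ) : ℝ :=
  ∑ k ∈ Finset.Icc (c + 1) n, binomPMF n p k

/-- `Pr[B < c]` for `B ~ Bin(n, p)`. -/
noncomputable def prLT (n : ℕ) (p : ℝ) (c : ℕ) : ℝ :=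
  ∑ k ∈ Finset.range c, binomPMF n p k

/-- The upper boundary `U` of the comfort zone: the smallest integer `c` with
`Pr[B > c] ≤ n^(−5.33)` (such a `c ≤ n` always exists). -/
noncomputable def Ubound (n : ℕ) (p : ℝ) : ℕ :=
  sInf {c : ℕ | prGT n p c ≤ (n : ℝ) ^ (-(5.33 : ℝ))}

/-- The lower boundary `L` of the comfort zone: the largest integer `c` with
`Pr[B < c] ≤ n^(−5.33)` (and `c = 0` always satisfies this). -/
noncomputable def Lbound (n : ℕ) (p : ℝ) : ℕ :=
  sSup {c : ℕ | prLT n p c ≤ (n : ℝ) ^ (-(5.33 : ℝ))}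

lemma pmf_nonneg {n : ℕ} {p : ℝ} (hp0 : 0 ≤ p) (hp1 : p ≤ 1) (k : ℕ) :
    0 ≤ binomPMF n p k := by
  unfold binomPMF
  have : (0:ℝ) ≤ 1 - p := by linarith
  positivity

lemma sum_tilt (n : ℕ) (p s : ℝ) :
    ∑ k ∈ Finset.range (n+1), (n.choose k : ℝ) * (p * s) ^ k * (1 - p) ^ (n - k)
      = (p * s + (1 - p)) ^ n := by
  rw [add_pow]
  exact Finset.sum_congr rfl fun k _ => by ring

lemma base_bound {n : ℕ} {p s : ℝ} (hp0 : 0 ≤ p) (hp1 : p ≤ 1) (hs : 0 ≤ s) :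
    (p * s + (1 - p)) ^ n ≤ Real.exp (p * n * (s - 1)) := by
  have h1 : p * s + (1 - p) ≤ Real.exp (p * (s - 1)) := by
    have := Real.add_one_le_exp (p * (s - 1))
    linarith
  have h0 : 0 ≤ p * s + (1 - p) := by nlinarith [mul_nonneg hp0 hs]
  calc (p * s + (1 - p)) ^ n ≤ (Real.exp (p * (s - 1))) ^ n := pow_le_pow_left₀ h0 h1 n
  _ = Real.exp (p * n * (s - 1)) := by
      rw [← Real.exp_nat_mul]; ring_nf

lemma mgf_GT {n c : ℕ} {p s : ℝ} (hp0 : 0 ≤ p) (hp1 : p ≤ 1) (hs : 1 ≤ s) :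
    prGT n p c * s ^ (c + 1) ≤ Real.exp (p * n * (s - 1)) := by
  have hq : (0:ℝ) ≤ 1 - p := by linarith
  have hs0 : (0:ℝ) ≤ s := by linarith
  calc prGT n p c * s ^ (c + 1)
      = ∑ k ∈ Finset.Icc (c + 1) n, binomPMF n p k * s ^ (c + 1) := by
        rw [prGT, Finset.sum_mul]
    _ ≤ ∑ k ∈ Finset.Icc (c + 1) n, (n.choose k : ℝ) * (p * s) ^ k * (1 - p) ^ (n - k) := by
        apply Finset.sum_le_sum
        intro k hk
        have hk1 : c + 1 ≤ k := (Finset.mem_Icc.mp hk).1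
        have : s ^ (c + 1) ≤ s ^ k := pow_le_pow_right₀ hs hk1
        have h0 : 0 ≤ (n.choose k : ℝ) * p ^ k * (1 - p) ^ (n - k) := pmf_nonneg hp0 hp1 k
        calc binomPMF n p k * s ^ (c + 1) ≤ binomPMF n p k * s ^ k := by
              apply mul_le_mul_of_nonneg_left this (pmf_nonneg hp0 hp1 k)
          _ = (n.choose k : ℝ) * (p * s) ^ k * (1 - p) ^ (n - k) := by
              unfold binomPMF; rw [mul_pow]; ring
    _ ≤ ∑ k ∈ Finset.range (n + 1), (n.choose k : ℝ) * (p * s) ^ k * (1 - p) ^ (n - k) := by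
        apply Finset.sum_le_sum_of_subset_of_nonneg
        · intro k hk
          exact Finset.mem_range.mpr (Nat.lt_succ_of_le (Finset.mem_Icc.mp hk).2)
        · intro k _ _
          positivity
    _ = (p * s + (1 - p)) ^ n := sum_tilt n p s
    _ ≤ Real.exp (p * n * (s - 1)) := base_bound hp0 hp1 hs0

lemma mgf_LT {n c : ℕ} {p s : ℝ} (hp0 : 0 ≤ p) (hp1 : p ≤ 1) (hs0 : 0 < s) (hs1 : s ≤ 1)
    (hc : 1 ≤ c) (hcn : c ≤ n + 1) :
    prLT n p c * s ^ (c - 1) ≤ Real.exp (p * n * (s - 1)) := by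
  have hq : (0:ℝ) ≤ 1 - p := by linarith
  calc prLT n p c * s ^ (c - 1)
      = ∑ k ∈ Finset.range c, binomPMF n p k * s ^ (c - 1) := by
        rw [prLT, Finset.sum_mul]
    _ ≤ ∑ k ∈ Finset.range c, (n.choose k : ℝ) * (p * s) ^ k * (1 - p) ^ (n - k) := by
        apply Finset.sum_le_sum
        intro k hk
        have hk1 : k ≤ c - 1 := Nat.le_sub_one_of_lt (Finset.mem_range.mp hk)
        have : s ^ (c - 1) ≤ s ^ k := pow_le_pow_of_le_one hs0.le hs1 hk1
        calc binomPMF n p k * s ^ (c - 1) ≤ binomPMF n p k * s ^ k :=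
              mul_le_mul_of_nonneg_left this (pmf_nonneg hp0 hp1 k)
          _ = (n.choose k : ℝ) * (p * s) ^ k * (1 - p) ^ (n - k) := by
              unfold binomPMF; rw [mul_pow]; ring
    _ ≤ ∑ k ∈ Finset.range (n + 1), (n.choose k : ℝ) * (p * s) ^ k * (1 - p) ^ (n - k) := by
        apply Finset.sum_le_sum_of_subset_of_nonneg
        · exact Finset.range_subset_range.mpr hcn
        · intro k _ _
          positivity
    _ = (p * s + (1 - p)) ^ n := sum_tilt n p s
    _ ≤ Real.exp (p * n * (s - 1)) := base_bound hp0 hp1 hs0.le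

lemma pmf_symm {n k : ℕ} (hk : k ≤ n) (p : ℝ) :
    binomPMF n p (n - k) = binomPMF n (1 - p) k := by
  unfold binomPMF
  rw [Nat.choose_symm hk, Nat.sub_sub_self hk, sub_sub_cancel]
  ring

lemma GT_symm {n c : ℕ} (hc : c ≤ n) (p : ℝ) :
    prGT n p c = prLT n (1 - p) (n - c) := by
  unfold prGT prLT
  apply Finset.sum_nbij' (fun k => n - k) (fun j => n - j)
  · intro k hk
    have h := Finset.mem_Icc.mp hk
    refine Finset.mem_range.mpr ?_
    omega
  · intro j hj
    have h := Finset.mem_range.mp hj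
    refine Finset.mem_Icc.mpr ?_
    omega
  · intro k hk
    have h := Finset.mem_Icc.mp hk
    omega
  · intro j hj
    have h := Finset.mem_range.mp hj
    omega
  · intro k hk
    have h := Finset.mem_Icc.mp hk
    have hkn : n - k ≤ n := Nat.sub_le n k
    have := pmf_symm (k := n - k) hkn p
    rw [Nat.sub_sub_self h.2] at this
    exact this

lemma LT_symm {n c : ℕ} (hc : c ≤ n) (p : ℝ) :
    prLT n p c = prGT n (1 - p) (n - c) := by
  unfold prGT prLT
  apply Finset.sum_nbij' (fun k => n - k) (fun j => n - j)
  · intro k hk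
    have h := Finset.mem_range.mp hk
    refine Finset.mem_Icc.mpr ?_
    omega
  · intro j hj
    have h := Finset.mem_Icc.mp hj
    refine Finset.mem_range.mpr ?_
    omega
  · intro k hk
    have h := Finset.mem_range.mp hk
    omega
  · intro j hj
    have h := Finset.mem_Icc.mp hj
    omega
  · intro k hk
    have h := Finset.mem_range.mp hk
    have hkn : n - k ≤ n := Nat.sub_le n k
    have := pmf_symm (k := n - k) hkn p
    rw [Nat.sub_sub_self (by omega : k ≤ n)] at this
    exact this

lemma prLT_ge_one {n c : ℕ} {p : ℝ} (hp0 : 0 ≤ p) (hp1 : p ≤ 1) (hc : n + 1 ≤ c) :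
    1 ≤ prLT n p c := by
  have h1 : ∑ k ∈ Finset.range (n+1), (n.choose k : ℝ) * (p * 1) ^ k * (1 - p) ^ (n - k)
      = (p * 1 + (1 - p)) ^ n := sum_tilt n p 1
  simp only [mul_one] at h1
  have h2 : (p + (1 - p)) ^ n = 1 := by norm_num
  have h3 : ∑ k ∈ Finset.range (n+1), binomPMF n p k = 1 := by
    rw [← h2, ← h1]
    exact Finset.sum_congr rfl fun k _ => by unfold binomPMF; ring_nf
  rw [← h3, prLT]
  apply Finset.sum_le_sum_of_subset_of_nonneg (Finset.range_subset_range.mpr hc)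
  intro k _ _
  exact pmf_nonneg hp0 hp1 k

-- log lower bound: log(1+x) ≥ x - 0.6 x^2 for 0 ≤ x ≤ 0.1
lemma logL1 {x : ℝ} (h0 : 0 ≤ x) (h1 : x ≤ 0.1) :
    x - 0.6 * x ^ 2 ≤ Real.log (1 + x) := by
  rw [Real.le_log_iff_exp_le (by linarith)]
  have hx0 : (0:ℝ) ≤ x - 0.6 * x ^ 2 := by nlinarith
  have hx1 : x - 0.6 * x ^ 2 ≤ 1 := by nlinarith
  have h := Real.exp_bound' hx0 hx1 (n := 3) (by norm_num)
  have hs : (∑ m ∈ Finset.range 3, (x - 0.6 * x ^ 2) ^ m / m.factorial) =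
      1 + (x - 0.6 * x ^ 2) + (x - 0.6 * x ^ 2) ^ 2 / 2 := by
    norm_num [Finset.sum_range_succ, Nat.factorial]
  rw [hs] at h
  have : 1 + (x - 0.6 * x ^ 2) + (x - 0.6 * x ^ 2) ^ 2 / 2 +
      (x - 0.6 * x ^ 2) ^ 3 * (3 + 1) / (Nat.factorial 3 * 3) ≤ 1 + x := by
    have : ((Nat.factorial 3 : ℝ)) = 6 := by norm_num [Nat.factorial]
    rw [this]
    nlinarith [sq_nonneg x, sq_nonneg (x - 0.6 * x^2)]
  linarith

-- log upper bound: -log(1-x) ≤ x + 0.6 x^2 for 0 ≤ x ≤ 0.05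
lemma logL2 {x : ℝ} (h0 : 0 ≤ x) (h1 : x ≤ 0.05) :
    -(x + 0.6 * x ^ 2) ≤ Real.log (1 - x) := by
  rw [Real.le_log_iff_exp_le (by linarith)]
  rw [Real.exp_neg]
  rw [inv_le_iff_one_le_mul₀ (Real.exp_pos _)]
  calc (1:ℝ) ≤ (1 - x) * (1 + (x + 0.6 * x ^ 2) + (x + 0.6 * x ^ 2) ^ 2 / 2) := by nlinarith
  _ ≤ (1 - x) * Real.exp (x + 0.6 * x ^ 2) := by
      have := Real.quadratic_le_exp_of_nonneg (x := x + 0.6 * x ^ 2) (by nlinarith)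
      nlinarith

lemma rpow_eq_exp {n : ℕ} (hn : 0 < n) :
    (n : ℝ) ^ (-(5.33:ℝ)) = Real.exp (-(5.33 * Real.log n)) := by
  rw [Real.rpow_def_of_pos (by exact_mod_cast hn)]
  ring_nf

lemma tailU {n c : ℕ} {p m a : ℝ} (hn : 0 < n) (hp0 : 0 ≤ p) (hp1 : p ≤ 1)
    (hm : m = p * n) (ha : 0 < a) (ham : a ≤ 0.05 * m)
    (hc : m + a ≤ (c : ℝ) + 1) (hlog : 5.33 * Real.log n ≤ 0.37 * (a ^ 2 / m)) :
    prGT n p c ≤ (n : ℝ) ^ (-(5.33 : ℝ)) := by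
  have hm0 : 0 < m := by nlinarith
  set δ : ℝ := a / m with hδdef
  have hδ0 : 0 < δ := div_pos ha hm0
  have hδ5 : δ ≤ 0.05 := by rw [hδdef, div_le_iff₀ hm0]; linarith
  have haδ : a = m * δ := by rw [hδdef]; field_simp
  set s : ℝ := 1 + δ with hsdef
  have hs1 : 1 ≤ s := by rw [hsdef]; linarith
  have hs0 : (0:ℝ) < s := by linarith
  have hmgf := mgf_GT (n := n) (c := c) hp0 hp1 hs1
  rw [← hm] at hmgf
  have hspow : s ^ (c + 1) = Real.exp (((c:ℝ) + 1) * Real.log s) := by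
    rw [show ((c:ℝ) + 1) = ((c + 1 : ℕ) : ℝ) by push_cast; ring,
      Real.exp_nat_mul, Real.exp_log hs0]
  have key : prGT n p c ≤ Real.exp (m * δ - ((c:ℝ) + 1) * Real.log s) := by
    rw [Real.exp_sub, le_div_iff₀ (Real.exp_pos _), ← hspow]
    have : m * (s - 1) = m * δ := by rw [hsdef]; ring
    rw [← this]
    exact hmgf
  refine le_trans key ?_
  rw [rpow_eq_exp hn]
  apply Real.exp_le_exp.mpr
  -- exponent bound
  have hlog1 : δ - 0.6 * δ ^ 2 ≤ Real.log s := logL1 hδ0.le (by linarith)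
  have hpos : (0:ℝ) ≤ δ - 0.6 * δ ^ 2 := by nlinarith
  have hcpos : (0:ℝ) ≤ m + a := by linarith
  have h2 : (m + a) * (δ - 0.6 * δ ^ 2) ≤ ((c:ℝ) + 1) * Real.log s := by
    apply mul_le_mul hc hlog1 hpos (by linarith)
  have h3 : m * δ - (m + a) * (δ - 0.6 * δ ^ 2) ≤ -(0.37 * (a ^ 2 / m)) := by
    rw [haδ]
    have : m * δ - (m + m * δ) * (δ - 0.6 * δ ^ 2)
        = m * δ ^ 2 * (-0.4 + 0.6 * δ) := by ring
    rw [this]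
    have h4 : (m * δ) ^ 2 / m = m * δ ^ 2 := by field_simp
    rw [h4]
    nlinarith [sq_nonneg δ, mul_pos hm0 (mul_pos hδ0 hδ0)]
  linarith

lemma tailL {n c : ℕ} {p m a : ℝ} (hn : 0 < n) (hp0 : 0 ≤ p) (hp1 : p ≤ 1)
    (hm : m = p * n) (ha : 0 < a) (ham : a ≤ 0.05 * m)
    (hc1 : 1 ≤ c) (hcn : c ≤ n) (hc : (c : ℝ) - 1 ≤ m - a)
    (hlog : 5.33 * Real.log n ≤ a ^ 2 / (2.4 * m)) :
    prLT n p c ≤ (n : ℝ) ^ (-(5.33 : ℝ)) := by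
  have hm0 : 0 < m := by nlinarith
  set u : ℝ := a / (1.2 * m) with hudef
  have hu0 : 0 < u := div_pos ha (by linarith)
  have hu5 : u ≤ 0.05 := by rw [hudef, div_le_iff₀ (by linarith)]; linarith
  have hau : a = 1.2 * m * u := by rw [hudef]; field_simp
  set s : ℝ := 1 - u with hsdef
  have hs0 : (0:ℝ) < s := by rw [hsdef]; linarith
  have hs1 : s ≤ 1 := by rw [hsdef]; linarith
  have hmgf := mgf_LT (n := n) (c := c) hp0 hp1 hs0 hs1 hc1 (by omega)
  rw [← hm] at hmgf
  have hcast : ((c - 1 : ℕ) : ℝ) = (c:ℝ) - 1 := by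
    rw [Nat.cast_sub hc1]; norm_num
  have hspow : s ^ (c - 1) = Real.exp (((c:ℝ) - 1) * Real.log s) := by
    rw [← hcast, Real.exp_nat_mul, Real.exp_log hs0]
  have key : prLT n p c ≤ Real.exp (m * (s - 1) - ((c:ℝ) - 1) * Real.log s) := by
    rw [Real.exp_sub, le_div_iff₀ (Real.exp_pos _), ← hspow]
    exact hmgf
  refine le_trans key ?_
  rw [rpow_eq_exp hn]
  apply Real.exp_le_exp.mpr
  have hlog2 : -(u + 0.6 * u ^ 2) ≤ Real.log s := logL2 hu0.le hu5
  have hlogs : Real.log s ≤ 0 := Real.log_nonpos hs0.le hs1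
  have hcge : (0:ℝ) ≤ (c:ℝ) - 1 := by
    have : (1:ℝ) ≤ (c:ℝ) := by exact_mod_cast hc1
    linarith
  have h2 : -(((c:ℝ) - 1) * Real.log s) ≤ (m - a) * (u + 0.6 * u ^ 2) := by
    have hb : -Real.log s ≤ u + 0.6 * u ^ 2 := by linarith
    have := mul_le_mul hc hb (by linarith [hlogs]) (by linarith)
    calc -(((c:ℝ) - 1) * Real.log s) = ((c:ℝ) - 1) * (-Real.log s) := by ring
      _ ≤ (m - a) * (u + 0.6 * u ^ 2) := this
  have hss : m * (s - 1) = -(m * u) := by rw [hsdef]; ring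
  rw [hss]
  have h3 : -(m * u) + (m - a) * (u + 0.6 * u ^ 2) ≤ -(a ^ 2 / (2.4 * m)) := by
    rw [hau]
    have h4 : (1.2 * m * u) ^ 2 / (2.4 * m) = 0.6 * m * u ^ 2 := by field_simp; ring
    rw [h4]
    nlinarith [mul_pos hm0 (mul_pos hu0 (mul_pos hu0 hu0))]
  linarith

lemma log_ge_13 {n : ℕ} (hn : 10 ^ 6 ≤ n) : (13:ℝ) ≤ Real.log n := by
  have hn0 : (0:ℝ) < n := by
    have : (0:ℕ) < n := by omega
    exact_mod_cast this
  rw [Real.le_log_iff_exp_le hn0]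
  have h1 : Real.exp 13 = Real.exp 1 ^ (13:ℕ) := by
    rw [← Real.exp_nat_mul]; norm_num
  have h2 : Real.exp 1 ^ (13:ℕ) ≤ 2.7182818286 ^ (13:ℕ) := by
    apply pow_le_pow_left₀ (Real.exp_pos 1).le Real.exp_one_lt_d9.le
  have h3 : (2.7182818286:ℝ) ^ (13:ℕ) ≤ 10 ^ 6 := by norm_num
  have h4 : (10:ℝ) ^ 6 ≤ n := by exact_mod_cast hn
  linarith [h1 ▸ (h2.trans (h3.trans h4))]

/-- For `d_t ~ Bin(n, p_t)` with `n ≥ 10^6`, `μ_t = p_t·n` and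
`ξ_t = min(μ_t, n−μ_t) ≥ 8200·ln n`, the comfort zone boundaries satisfy
`U_t ≤ μ_t + 4√(ξ_t·ln n)` and `L_t ≥ μ_t − 4√(ξ_t·ln n)`. -/
theorem stmt_7 (n : ℕ) (hn : 10 ^ 6 ≤ n) (pt : ℝ) (hp0 : 0 ≤ pt) (hp1 : pt ≤ 1)
    (hξ : 8200 * Real.log n ≤ min (pt * n) ((n : ℝ) - pt * n)) :
    ((Ubound n pt : ℝ) ≤ pt * n
        + 4 * Real.sqrt (min (pt * n) ((n : ℝ) - pt * n) * Real.log n)) ∧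
    ((Lbound n pt : ℝ) ≥ pt * n
        - 4 * Real.sqrt (min (pt * n) ((n : ℝ) - pt * n) * Real.log n)) := by
  have hn0 : 0 < n := by omega
  have hn1 : (1:ℝ) < n := by
    have : (10:ℝ) ^ 6 ≤ n := by exact_mod_cast hn
    linarith
  set lam := Real.log n with hlam
  set m := pt * (n:ℝ) with hmdef
  set xi := min m ((n:ℝ) - m) with hxidef
  set a := 4 * Real.sqrt (xi * lam) with hadef
  have hlam13 : (13:ℝ) ≤ lam := log_ge_13 hn
  have hlam0 : (0:ℝ) < lam := by linarith
  have hxi0 : (0:ℝ) < xi := by nlinarith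
  have hxilam : lam ≤ xi / 8200 := by linarith
  have ha2 : a ^ 2 = 16 * (xi * lam) := by
    rw [hadef, mul_pow, Real.sq_sqrt (by positivity)]
    norm_num
  have ha0 : 0 < a := by
    rw [hadef]
    have : 0 < Real.sqrt (xi * lam) := Real.sqrt_pos.mpr (by positivity)
    linarith
  have haxi : a ≤ 0.05 * xi := by
    have h1 : xi * lam ≤ (xi / 80) ^ 2 := by nlinarith
    have h2 : Real.sqrt (xi * lam) ≤ xi / 80 := by
      calc Real.sqrt (xi * lam) ≤ Real.sqrt ((xi / 80) ^ 2) := Real.sqrt_le_sqrt h1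
        _ = xi / 80 := Real.sqrt_sq (by positivity)
    rw [hadef]; linarith
  have hm0 : 0 ≤ m := by positivity
  have hmn : m ≤ n := by nlinarith
  have hxm : xi ≤ m := min_le_left _ _
  have hxm' : xi ≤ (n:ℝ) - m := min_le_right _ _
  constructor
  · -- Upper bound
    rcases lt_or_ge (m + a) (n:ℝ) with hcase | hcase
    · set c := ⌊m + a⌋₊ with hcdef
      have hma0 : (0:ℝ) ≤ m + a := by linarith
      have hcle : (c:ℝ) ≤ m + a := Nat.floor_le hma0
      have hclt : m + a < (c:ℝ) + 1 := Nat.lt_floor_add_one _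
      have hcn : c ≤ n := by
        have : (c:ℝ) < n := lt_of_le_of_lt hcle hcase
        exact_mod_cast this.le
      have hmem : prGT n pt c ≤ (n:ℝ) ^ (-(5.33:ℝ)) := by
        rcases le_or_gt m ((n:ℝ) - m) with hside | hside
        · have hxieq : xi = m := min_eq_left hside
          apply tailU hn0 hp0 hp1 hmdef ha0 (by rw [← hxieq]; exact haxi) hclt.le
          rw [ha2, hxieq]
          have hmpos : 0 < m := by rw [← hxieq]; exact hxi0
          rw [show 16 * (m * lam) / m = 16 * lam by field_simp]
          linarith
        · have hxieq : xi = (n:ℝ) - m := min_eq_right hside.le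
          have hclt' : c < n := by
            have : (c:ℝ) < n := lt_of_le_of_lt hcle hcase
            exact_mod_cast this
          rw [GT_symm hcn pt]
          have hcast : ((n - c : ℕ) : ℝ) = (n:ℝ) - c := by
            rw [Nat.cast_sub hcn]
          apply tailL hn0 (by linarith) (by linarith)
            (show (n:ℝ) - m = (1 - pt) * n by rw [hmdef]; ring) ha0
            (by rw [← hxieq]; exact haxi) (by omega) (by omega)
          · rw [hcast]; linarith
          · rw [ha2, hxieq]
            have hmpos : 0 < (n:ℝ) - m := by rw [← hxieq]; exact hxi0
            rw [show 16 * (((n:ℝ) - m) * lam) / (2.4 * ((n:ℝ) - m)) = 16 / 2.4 * lam by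
              field_simp]
            linarith
      have hle : Ubound n pt ≤ c := Nat.sInf_le hmem
      have : (Ubound n pt : ℝ) ≤ (c:ℝ) := by exact_mod_cast hle
      linarith
    · have hmem : prGT n pt n ≤ (n:ℝ) ^ (-(5.33:ℝ)) := by
        have : prGT n pt n = 0 := by
          rw [prGT, Finset.Icc_eq_empty (by omega), Finset.sum_empty]
        rw [this]
        positivity
      have hle : Ubound n pt ≤ n := Nat.sInf_le hmem
      have : (Ubound n pt : ℝ) ≤ (n:ℝ) := by exact_mod_cast hle
      linarith
  · -- Lower bound
    have hbdd : BddAbove {c : ℕ | prLT n pt c ≤ (n:ℝ) ^ (-(5.33:ℝ))} := by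
      refine ⟨n, fun c' hc' => ?_⟩
      by_contra hcon
      push_neg at hcon
      have h1 : 1 ≤ prLT n pt c' := prLT_ge_one hp0 hp1 (by omega)
      have h2 : (n:ℝ) ^ (-(5.33:ℝ)) < 1 :=
        Real.rpow_lt_one_of_one_lt_of_neg hn1 (by norm_num)
      have := hc'
      simp only [Set.mem_setOf_eq] at this
      linarith
    rcases le_or_gt (m - a) 0 with hcase | hcase
    · have : (0:ℝ) ≤ (Lbound n pt : ℝ) := Nat.cast_nonneg _
      linarith
    · set c := ⌈m - a⌉₊ with hcdef
      have hc1 : 1 ≤ c := Nat.one_le_iff_ne_zero.mpr (by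
        intro h
        rw [hcdef] at h
        have := Nat.ceil_eq_zero.mp h
        linarith)
      have hcle : m - a ≤ (c:ℝ) := Nat.le_ceil _
      have hclt : (c:ℝ) < m - a + 1 := Nat.ceil_lt_add_one hcase.le
      have hcn : c ≤ n := by
        rw [hcdef]
        apply Nat.ceil_le.mpr
        push_cast
        linarith
      have hmem : prLT n pt c ≤ (n:ℝ) ^ (-(5.33:ℝ)) := by
        rcases le_or_gt m ((n:ℝ) - m) with hside | hside
        · have hxieq : xi = m := min_eq_left hside
          apply tailL hn0 hp0 hp1 hmdef ha0 (by rw [← hxieq]; exact haxi) hc1 hcn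
            (by linarith)
          rw [ha2, hxieq]
          have hmpos : 0 < m := by rw [← hxieq]; exact hxi0
          rw [show 16 * (m * lam) / (2.4 * m) = 16 / 2.4 * lam by field_simp]
          linarith
        · have hxieq : xi = (n:ℝ) - m := min_eq_right hside.le
          rw [LT_symm hcn pt]
          have hcast : ((n - c : ℕ) : ℝ) = (n:ℝ) - c := by
            rw [Nat.cast_sub hcn]
          apply tailU hn0 (by linarith) (by linarith)
            (show (n:ℝ) - m = (1 - pt) * n by rw [hmdef]; ring) ha0
            (by rw [← hxieq]; exact haxi)
          · rw [hcast]; linarith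
          · rw [ha2, hxieq]
            have hmpos : 0 < (n:ℝ) - m := by rw [← hxieq]; exact hxi0
            rw [show 0.37 * (16 * (((n:ℝ) - m) * lam) / ((n:ℝ) - m)) = 0.37 * 16 * lam by
              field_simp]
            linarith
      have hle : c ≤ Lbound n pt := le_csSup hbdd hmem
      have : (c:ℝ) ≤ (Lbound n pt : ℝ) := by exact_mod_cast hle
      linarith
end

section
/- Let n ≥ 10^6. Let d_t ~ Bin(n, p_t) with ξ_t = min(μ_t, n−μ_t) ≥ 8200·ln n, and let d_k ~ Bin(n, p_k) with μ_k ≤ μ_t. Let ℓ ∈ {0, 1, 2} and let h be an integer such that h ∈ Z_t and h − 2 ∈ Z_k. Then Pr[d_k = h − ℓ] ≤ 264·e·√(ln n / ξ_t) · Pr[d_k > h]. -/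
open Real Finset

section Binomial

variable {n : ℕ} {p : ℝ}

lemma binomPMF_nonneg (hp0 : 0 ≤ p) (hp1 : p ≤ 1) (k : ℕ) : 0 ≤ binomPMF n p k := by
  have : 0 ≤ 1 - p := by linarith
  unfold binomPMF
  positivity

lemma binomPMF_eq_zero_of_lt {k : ℕ} (hk : n < k) : binomPMF n p k = 0 := by
  simp [binomPMF, Nat.choose_eq_zero_of_lt hk]

lemma sum_binomPMF_mul_exp (t : ℝ) :
    ∑ j ∈ range (n + 1), binomPMF n p j * exp (t * j) = (p * exp t + (1 - p)) ^ n := by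
  rw [add_pow]
  refine sum_congr rfl fun j _ => ?_
  rw [binomPMF, mul_pow, mul_comm t, exp_nat_mul]
  ring

lemma prLT_succ_self : prLT n p (n + 1) = 1 := by
  simpa [prLT] using sum_binomPMF_mul_exp (n := n) (p := p) 0

lemma sum_binomPMF_mul_exp_le (hp0 : 0 ≤ p) (hp1 : p ≤ 1) (t : ℝ) :
    ∑ j ∈ range (n + 1), binomPMF n p j * exp (t * j) ≤ exp (p * n * (exp t - 1)) := by
  rw [sum_binomPMF_mul_exp, show p * n * (exp t - 1) = n * (p * (exp t - 1)) by ring, exp_nat_mul]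
  exact pow_le_pow_left₀ (by nlinarith [exp_pos t])
    (by linarith [add_one_le_exp (p * (exp t - 1))]) n

lemma sum_binomPMF_le_exp_of_le_mul (hp0 : 0 ≤ p) (hp1 : p ≤ 1) {S : Finset ℕ} {a t : ℝ}
    (hS : ∀ j ∈ S, a ≤ t * j) :
    ∑ j ∈ S, binomPMF n p j ≤ exp (p * n * (exp t - 1) - a) := by
  have hnn := binomPMF_nonneg (n := n) hp0 hp1
  calc ∑ j ∈ S, binomPMF n p j = ∑ j ∈ S with j ≤ n, binomPMF n p j :=
        (sum_filter_of_ne fun j _ hj => not_lt.1 fun hlt => hj (binomPMF_eq_zero_of_lt hlt)).symm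
    _ ≤ ∑ j ∈ S with j ≤ n, binomPMF n p j * exp (t * j) * exp (-a) := by
        refine sum_le_sum fun j hj => ?_
        rw [mul_assoc, ← exp_add]
        exact le_mul_of_one_le_right (hnn j)
          (one_le_exp (by linarith [hS j (mem_filter.1 hj).1]))
    _ ≤ ∑ j ∈ range (n + 1), binomPMF n p j * exp (t * j) * exp (-a) :=
        sum_le_sum_of_subset_of_nonneg
          (fun j hj => mem_range.2 (Nat.lt_succ_of_le (mem_filter.1 hj).2))
          fun j _ _ => by have := hnn j; positivity
    _ ≤ exp (p * n * (exp t - 1)) * exp (-a) := by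
        rw [← sum_mul]
        exact mul_le_mul_of_nonneg_right (sum_binomPMF_mul_exp_le hp0 hp1 t) (exp_pos _).le
    _ = exp (p * n * (exp t - 1) - a) := by rw [← exp_add, ← sub_eq_add_neg]

lemma exp_le_one_add_add_sq {x : ℝ} (hx : |x| ≤ 1) : exp x ≤ 1 + x + x ^ 2 := by
  linarith [(abs_le.1 (abs_exp_sub_one_sub_id_le hx)).2]

lemma prLT_le_exp (hp0 : 0 ≤ p) (hp1 : p ≤ 1) {c : ℕ} {s : ℝ} (hμ : 0 < p * n) (hs0 : 0 ≤ s)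
    (hs : s ≤ 2 * (p * n)) (hc : (c : ℝ) ≤ p * n - s + 1) :
    prLT n p c ≤ exp (-(s ^ 2 / (4 * (p * n)))) := by
  set τ := s / (2 * (p * n))
  have hτ0 : 0 ≤ τ := by positivity
  have hτ1 : τ ≤ 1 := (div_le_one (by positivity)).2 hs
  refine (sum_binomPMF_le_exp_of_le_mul hp0 hp1 (a := -τ * (p * n - s)) (t := -τ)
    fun j hj => ?_).trans (exp_le_exp.2 ?_)
  · have : (j : ℝ) + 1 ≤ c := by exact_mod_cast mem_range.1 hj
    nlinarith
  · have hexp := exp_le_one_add_add_sq (x := -τ) (by rw [abs_neg, abs_of_nonneg hτ0]; exact hτ1)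
    have key : p * n * (-τ + τ ^ 2) + τ * (p * n - s) = -(s ^ 2 / (4 * (p * n))) := by
      simp only [τ]; field_simp; ring
    nlinarith

lemma prGT_le_exp (hp0 : 0 ≤ p) (hp1 : p ≤ 1) {c : ℕ} {s : ℝ} (hμ : 0 < p * n) (hs0 : 0 ≤ s)
    (hs : s ≤ 2 * (p * n)) (hc : p * n + s ≤ c + 1) :
    prGT n p c ≤ exp (-(s ^ 2 / (4 * (p * n)))) := by
  set τ := s / (2 * (p * n))
  have hτ0 : 0 ≤ τ := by positivity
  have hτ1 : τ ≤ 1 := (div_le_one (by positivity)).2 hs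
  refine (sum_binomPMF_le_exp_of_le_mul hp0 hp1 (a := τ * (p * n + s)) (t := τ)
    fun j hj => ?_).trans (exp_le_exp.2 ?_)
  · have : (c : ℝ) + 1 ≤ j := by exact_mod_cast (mem_Icc.1 hj).1
    nlinarith
  · have hexp := exp_le_one_add_add_sq (x := τ) (by rw [abs_of_nonneg hτ0]; exact hτ1)
    have key : p * n * (τ + τ ^ 2) - τ * (p * n + s) = -(s ^ 2 / (4 * (p * n))) := by
      simp only [τ]; field_simp; ring
    nlinarith

lemma prGT_le_exp_of_two_mul_le (hp0 : 0 ≤ p) (hp1 : p ≤ 1) {c : ℕ} {s : ℝ}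
    (hs : 2 * (p * n) ≤ s) (hc : p * n + s ≤ c + 1) :
    prGT n p c ≤ exp (-(s / 2)) := by
  refine (sum_binomPMF_le_exp_of_le_mul hp0 hp1 (a := p * n + s) (t := 1)
    fun j hj => ?_).trans (exp_le_exp.2 ?_)
  · have : (c : ℝ) + 1 ≤ j := by exact_mod_cast (mem_Icc.1 hj).1
    linarith
  · have : 0 ≤ p * n := by positivity
    nlinarith [exp_one_lt_three]

lemma prGT_eq_prLT_one_sub {c : ℕ} : prGT n p c = prLT n (1 - p) (n - c) := by
  refine sum_nbij' (fun j => n - j) (fun i => n - i) (fun j hj => ?_) (fun i hi => ?_)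
    (fun j hj => ?_) (fun i hi => ?_) fun j hj => ?_
  all_goals simp only [mem_Icc, mem_range] at *
  all_goals try omega
  rw [binomPMF, binomPMF, Nat.choose_symm hj.2, Nat.sub_sub_self hj.2, sub_sub_cancel]
  ring

end Binomial

section ComfortZone

variable {n : ℕ} {p : ℝ}

lemma exp_neg_mul_log_le_rpow_neg {x a b : ℝ} (hx : 1 ≤ x) (hab : b ≤ a) :
    exp (-(a * log x)) ≤ x ^ (-b) := by
  rw [rpow_def_of_pos (by linarith)]
  exact exp_le_exp.2 (by nlinarith [log_nonneg hx])

lemma le_Lbound (hn : 2 ≤ n) (hp0 : 0 ≤ p) (hp1 : p ≤ 1) {c : ℕ}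
    (hc : prLT n p c ≤ (n : ℝ) ^ (-(5.33 : ℝ))) : c ≤ Lbound n p := by
  refine le_csSup ⟨n, fun b (hb : prLT n p b ≤ _) => ?_⟩ hc
  by_contra! hbn
  have hmono : prLT n p (n + 1) ≤ prLT n p b :=
    sum_le_sum_of_subset_of_nonneg (range_subset_range.2 hbn)
      fun j _ _ => binomPMF_nonneg hp0 hp1 j
  have hε : (n : ℝ) ^ (-(5.33 : ℝ)) < 1 :=
    rpow_lt_one_of_one_lt_of_neg (by exact_mod_cast hn) (by norm_num)
  rw [prLT_succ_self] at hmono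
  linarith

lemma Ubound_le_of_prGT_le {c : ℕ} (hc : prGT n p c ≤ (n : ℝ) ^ (-(5.33 : ℝ))) :
    Ubound n p ≤ c :=
  Nat.sInf_le hc

lemma Ubound_le_self : Ubound n p ≤ n :=
  Ubound_le_of_prGT_le <| by
    simp only [prGT, Icc_eq_empty_of_lt n.lt_succ_self, sum_empty]
    positivity

lemma sub_sqrt_le_Lbound (hn : 2 ≤ n) (hp0 : 0 ≤ p) (hp1 : p ≤ 1) :
    p * n - √(22 * (p * n * log n)) ≤ Lbound n p := by
  set μ := p * n
  set s := √(22 * (μ * log n))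
  rcases le_or_gt (μ - s) 0 with hle | hlt
  · exact hle.trans (Nat.cast_nonneg _)
  have hn1 : (1 : ℝ) ≤ n := by exact_mod_cast (by omega : 1 ≤ n)
  have hL := log_nonneg hn1
  have hs0 : 0 ≤ s := sqrt_nonneg _
  have hμ : 0 < μ := by linarith
  have hs2 : s ^ 2 = 22 * (μ * log n) := sq_sqrt (by positivity)
  have htail : prLT n p ⌈μ - s⌉₊ ≤ (n : ℝ) ^ (-(5.33 : ℝ)) := by
    refine (prLT_le_exp hp0 hp1 hμ hs0 (by linarith) (Nat.ceil_lt_add_one hlt.le).le).trans ?_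
    rw [hs2, show 22 * (μ * log n) / (4 * μ) = 5.5 * log n by field_simp; ring]
    exact exp_neg_mul_log_le_rpow_neg hn1 (by norm_num)
  exact (Nat.le_ceil _).trans (Nat.cast_le.2 (le_Lbound hn hp0 hp1 htail))

/-- Via the lower tail of the complementary count `n - B ~ Bin(n, 1 - p)`. -/
lemma Ubound_le_add_sqrt_compl (hn : 2 ≤ n) (hp0 : 0 ≤ p) (hp1 : p ≤ 1) :
    (Ubound n p : ℝ) ≤ p * n + √(22 * ((n - p * n) * log n)) + 1 := by
  set μ := p * n
  set s := √(22 * ((n - μ) * log n))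
  have hn1 : (1 : ℝ) ≤ n := by exact_mod_cast (by omega : 1 ≤ n)
  have hL := log_nonneg hn1
  have hs0 : 0 ≤ s := sqrt_nonneg _
  rcases le_or_gt (n : ℝ) (μ + s) with hle | hlt
  · exact (Nat.cast_le.2 Ubound_le_self).trans (by linarith)
  have hcn : ⌈μ + s⌉₊ ≤ n := Nat.ceil_le.2 hlt.le
  have hν : (1 - p) * n = n - μ := by ring
  have hν0 : (n : ℝ) - μ ≠ 0 := by linarith
  have htail := prLT_le_exp (n := n) (p := 1 - p) (c := n - ⌈μ + s⌉₊) (s := s) (by linarith)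
    (by linarith) (by linarith) hs0 (by linarith)
    (by push_cast [hcn]; linarith [Nat.le_ceil (μ + s)])
  rw [← prGT_eq_prLT_one_sub, hν, sq_sqrt (by nlinarith),
    show 22 * ((n - μ) * log n) / (4 * (n - μ)) = 5.5 * log n by field_simp; ring] at htail
  calc (Ubound n p : ℝ) ≤ ⌈μ + s⌉₊ := Nat.cast_le.2 (Ubound_le_of_prGT_le (htail.trans
        (exp_neg_mul_log_le_rpow_neg hn1 (by norm_num))))
    _ ≤ μ + s + 1 := (Nat.ceil_lt_add_one (by positivity)).le

lemma Ubound_le_add_sqrt_add (hn : 2 ≤ n) (hp0 : 0 ≤ p) (hp1 : p ≤ 1) :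
    (Ubound n p : ℝ) ≤ p * n + √(22 * (p * n * log n)) + 11 * log n + 1 := by
  set μ := p * n
  set L := log n
  have hL : 0 < L := log_pos (by exact_mod_cast hn)
  set s := √(22 * (μ * L)) + 11 * L
  have hμ0 : 0 ≤ μ := by positivity
  have hc : μ + s ≤ ⌈μ + s⌉₊ + 1 := by linarith [Nat.le_ceil (μ + s)]
  have htail : prGT n p ⌈μ + s⌉₊ ≤ exp (-(5.5 * L)) := by
    rcases le_total s (2 * μ) with hs | hs
    · have hμ : 0 < μ := by linarith [sqrt_nonneg (22 * (μ * L))]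
      refine (prGT_le_exp hp0 hp1 hμ (by positivity) hs hc).trans (exp_le_exp.2 ?_)
      have hs2 : 22 * (μ * L) ≤ s ^ 2 := by
        nlinarith [sq_sqrt (by positivity : 0 ≤ 22 * (μ * L)), sqrt_nonneg (22 * (μ * L))]
      rw [neg_le_neg_iff, le_div_iff₀ (by positivity)]
      linarith
    · exact (prGT_le_exp_of_two_mul_le hp0 hp1 hs hc).trans
        (exp_le_exp.2 (by linarith [sqrt_nonneg (22 * (μ * L))]))
  calc (Ubound n p : ℝ) ≤ ⌈μ + s⌉₊ := Nat.cast_le.2 (Ubound_le_of_prGT_le (htail.trans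
        (exp_neg_mul_log_le_rpow_neg (by exact_mod_cast (by omega : 1 ≤ n)) (by norm_num))))
    _ ≤ μ + s + 1 := (Nat.ceil_lt_add_one (by positivity)).le
    _ = _ := by ring

lemma Ubound_le_add (hn : 2 ≤ n) (hp0 : 0 ≤ p) (hp1 : p ≤ 1) :
    (Ubound n p : ℝ) ≤ p * n + √(22 * (min (p * n) (n - p * n) * log n)) + 11 * log n + 1 := by
  have hL : 0 ≤ log n := log_nonneg (by exact_mod_cast (by omega : 1 ≤ n))
  rcases min_choice (p * n) (n - p * n) with hmin | hmin <;> rw [hmin]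
  · exact Ubound_le_add_sqrt_add hn hp0 hp1
  · linarith [Ubound_le_add_sqrt_compl hn hp0 hp1]

end ComfortZone

section Window

lemma binomPMF_succ_mul {n i : ℕ} (p : ℝ) (hi : i < n) :
    binomPMF n p (i + 1) * ((i + 1) * (1 - p)) = binomPMF n p i * ((n - i) * p) := by
  have hchoose : ((n.choose (i + 1) * (i + 1) : ℕ) : ℝ) = ((n.choose i * (n - i) : ℕ) : ℝ) := by
    rw [Nat.choose_succ_right_eq]
  push_cast [Nat.cast_sub hi.le] at hchoose
  have hpow : (1 - p) ^ (n - i) = (1 - p) ^ (n - (i + 1)) * (1 - p) := by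
    rw [← pow_succ]; congr 1; omega
  rw [binomPMF, binomPMF, hpow, pow_succ]
  linear_combination p ^ i * p * (1 - p) ^ (n - (i + 1)) * (1 - p) * hchoose

lemma exp_neg_div_le_div_add {x a : ℝ} (hx : 0 < x) (ha : 0 ≤ a) :
    exp (-(a / x)) ≤ x / (x + a) := by
  rw [exp_neg, show x / (x + a) = (a / x + 1)⁻¹ by rw [div_add_one hx.ne', inv_div, add_comm]]
  exact inv_anti₀ (by positivity) (add_one_le_exp _)

/-- Up to `μ + D` the ratio `Pr[B = i+1] / Pr[B = i] = (n - i) p / ((i + 1)(1 - p))` is at least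
`μ (ν - D) / ((μ + D + 1) ν)`, which dominates this exponential. -/
lemma exp_neg_mul_binomPMF_le_succ {n : ℕ} {p D : ℝ} (hp : 0 ≤ p) (hD : 0 ≤ D) (hμ : 0 < p * n)
    (hDν : D < n - p * n) {i : ℕ} (hi : (i : ℝ) ≤ p * n + D) :
    exp (-((D + 1) / (p * n) + D / (n - p * n - D))) * binomPMF n p i ≤ binomPMF n p (i + 1) := by
  set μ := p * n
  set ν := (n : ℝ) - μ
  have hνD : 0 < ν - D := by linarith
  have hq : 0 < 1 - p := by
    have : (1 - p) * n = ν := by simp only [ν, μ]; ring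
    nlinarith
  have hin : i < n := by exact_mod_cast (show (i : ℝ) < n by linarith)
  have hγ : exp (-((D + 1) / μ + D / (ν - D))) ≤ μ / (μ + (D + 1)) * ((ν - D) / (ν - D + D)) := by
    rw [neg_add, exp_add]
    exact mul_le_mul (exp_neg_div_le_div_add hμ (by linarith)) (exp_neg_div_le_div_add hνD hD)
      (exp_pos _).le (by positivity)
  have hratio :
      μ / (μ + (D + 1)) * ((ν - D) / (ν - D + D)) * ((i + 1) * (1 - p)) ≤ (n - i) * p := by
    have hpν : p * ν = μ * (1 - p) := by simp only [ν, μ]; ring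
    have hfactors : (ν - D) * (i + 1) ≤ (n - i) * (μ + (D + 1)) :=
      mul_le_mul (by linarith) (by linarith) (by positivity) (by linarith)
    rw [sub_add_cancel, div_mul_div_comm, div_mul_eq_mul_div,
      div_le_iff₀ (mul_pos (by linarith) (by linarith))]
    calc μ * (ν - D) * ((i + 1) * (1 - p)) = μ * (1 - p) * ((ν - D) * (i + 1)) := by ring
      _ ≤ μ * (1 - p) * ((n - i) * (μ + (D + 1))) := by gcongr
      _ = (n - i) * p * ((μ + (D + 1)) * ν) := by rw [← hpν]; ring
  have hpmf := binomPMF_nonneg (n := n) (k := i) hp (by linarith)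
  refine le_of_mul_le_mul_right ?_ (by positivity : (0 : ℝ) < (i + 1) * (1 - p))
  rw [binomPMF_succ_mul p hin]
  calc exp (-((D + 1) / μ + D / (ν - D))) * binomPMF n p i * ((i + 1) * (1 - p))
      = binomPMF n p i * (exp (-((D + 1) / μ + D / (ν - D))) * ((i + 1) * (1 - p))) := by ring
    _ ≤ binomPMF n p i * ((n - i) * p) :=
      mul_le_mul_of_nonneg_left ((mul_le_mul_of_nonneg_right hγ (by positivity)).trans hratio) hpmf

lemma pow_mul_le_of_mul_le_succ {f : ℕ → ℝ} {γ : ℝ} (hγ : 0 ≤ γ) {m k : ℕ}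
    (hf : ∀ i, m ≤ i → i < m + k → γ * f i ≤ f (i + 1)) : γ ^ k * f m ≤ f (m + k) := by
  induction k with
  | zero => simp
  | succ k ih =>
    calc γ ^ (k + 1) * f m = γ * (γ ^ k * f m) := by ring
      _ ≤ γ * f (m + k) := mul_le_mul_of_nonneg_left (ih fun i h1 h2 => hf i h1 (by omega)) hγ
      _ ≤ f (m + (k + 1)) := hf _ (by omega) (by omega)

lemma mul_pow_mul_le_sum_Icc {f : ℕ → ℝ} {γ : ℝ} (hγ0 : 0 ≤ γ) (hγ1 : γ ≤ 1) {m h w d : ℕ}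
    (hf : 0 ≤ f m) (hmh : m ≤ h) (hhm : h ≤ m + d)
    (hstep : ∀ i, m ≤ i → i < h + w → γ * f i ≤ f (i + 1)) :
    w * (γ ^ (w + d) * f m) ≤ ∑ j ∈ Icc (h + 1) (h + w), f j := by
  have hcard : #(Icc (h + 1) (h + w)) = w := by simp
  calc (w : ℝ) * (γ ^ (w + d) * f m) = ∑ j ∈ Icc (h + 1) (h + w), γ ^ (w + d) * f m := by
        rw [sum_const, hcard, nsmul_eq_mul]
    _ ≤ ∑ j ∈ Icc (h + 1) (h + w), f j := sum_le_sum fun j hj => by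
        obtain ⟨hj1, hj2⟩ := mem_Icc.1 hj
        calc γ ^ (w + d) * f m ≤ γ ^ (j - m) * f m :=
              mul_le_mul_of_nonneg_right (pow_le_pow_of_le_one hγ0 hγ1 (by omega)) hf
          _ ≤ f (m + (j - m)) :=
              pow_mul_le_of_mul_le_succ hγ0 fun i h1 h2 => hstep i h1 (by omega)
          _ = f j := by rw [Nat.add_sub_cancel' (by omega)]

lemma mul_exp_mul_binomPMF_le_prGT {n : ℕ} {p D : ℝ} (hp : 0 ≤ p) (hD : 0 ≤ D) (hμ : 0 < p * n)
    (hDν : D < n - p * n) {m h w d : ℕ} (hmh : m ≤ h) (hhm : h ≤ m + d)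
    (hw : (h + w : ℝ) ≤ p * n + D) :
    w * (exp (-((w + d) * ((D + 1) / (p * n) + D / (n - p * n - D)))) * binomPMF n p m)
      ≤ prGT n p h := by
  set β := (D + 1) / (p * n) + D / (n - p * n - D)
  have hp1 : p ≤ 1 := by nlinarith
  have hβ : 0 ≤ β := add_nonneg (by positivity) (div_nonneg hD (by linarith))
  have hhw : h + w ≤ n := by exact_mod_cast (show (h + w : ℝ) ≤ n by linarith)
  rw [show -(((w : ℝ) + d) * β) = ((w + d : ℕ) : ℝ) * -β by push_cast; ring, exp_nat_mul]
  refine (mul_pow_mul_le_sum_Icc (exp_pos _).le (exp_le_one_iff.2 (by linarith))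
    (binomPMF_nonneg hp hp1 m) hmh hhm fun i _ hi =>
      exp_neg_mul_binomPMF_le_succ hp hD hμ hDν ?_).trans
    (sum_le_sum_of_subset_of_nonneg (Icc_subset_Icc_right hhw)
      fun j _ _ => binomPMF_nonneg hp hp1 j)
  have : (i : ℝ) + 1 ≤ h + w := by exact_mod_cast hi
  linarith

end Window

section Numerics

lemma thirteen_le_log {x : ℝ} (hx : 1000000 ≤ x) : 13 ≤ log x := by
  rw [le_log_iff_exp_le (by linarith)]
  calc exp 13 = exp 1 ^ 13 := by rw [← exp_nat_mul]; norm_num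
    _ ≤ 2.7182818286 ^ 13 := pow_le_pow_left₀ (exp_pos 1).le exp_one_lt_d9.le 13
    _ ≤ x := by linarith

lemma le_of_sub_sqrt_le_add_sqrt {L μ μ' ξ : ℝ} (hL : 13 ≤ L) (hμ : 8200 * L ≤ μ) (hξ : ξ ≤ μ)
    (h : μ - √(22 * (μ * L)) ≤ μ' + √(22 * (ξ * L)) + 11 * L + 3) :
    0.89 * μ ≤ μ' := by
  have hsq : √(22 * (μ * L)) ≤ 0.052 * μ := sqrt_le_iff.2 ⟨by linarith, by nlinarith⟩
  have hsqξ : √(22 * (ξ * L)) ≤ √(22 * (μ * L)) := sqrt_le_sqrt (by nlinarith)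
  linarith

lemma window_exponent_le {L ξ₀ ξ μ ν w D : ℝ} (hL : 13 ≤ L) (hξ₀ : 8200 * L ≤ ξ₀)
    (hξ : 0.89 * ξ₀ ≤ ξ) (hμ : ξ ≤ μ) (hν : ξ ≤ ν) (hw0 : 0 ≤ w)
    (hw : w ≤ (√(L / ξ₀))⁻¹ / 10 + 1) (hD : D = √(22 * (ξ * L)) + 11 * L + 3 + w) :
    D < ν ∧ (w + 2) * ((D + 1) / μ + D / (ν - D)) ≤ 3 := by
  have hL0 : 0 < L := by linarith
  have hξ0 : 0 < ξ := by nlinarith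
  set B := √(ξ * L)
  have hB2 : B ^ 2 = ξ * L := sq_sqrt (by positivity)
  have hBL : 85 * L ≤ B := (le_sqrt (by positivity) (by positivity)).2 (by nlinarith)
  have hB0 : 0 < B := by linarith
  have hξB : 85 * B ≤ ξ := le_of_mul_le_mul_right (by nlinarith) hL0
  have hsq : √(22 * (ξ * L)) ≤ 4.7 * B := sqrt_le_iff.2 ⟨by positivity, by nlinarith⟩
  have hr : (√(L / ξ₀))⁻¹ ≤ B / (0.94 * L) := by
    rw [← sqrt_inv, inv_div]
    refine sqrt_le_iff.2 ⟨by positivity, ?_⟩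
    rw [div_pow, hB2, div_le_div_iff₀ (by positivity) (by positivity)]
    nlinarith [sq_nonneg L]
  have hw2 : w + 2 ≤ B / (9.4 * L) + 3 := by
    rw [show B / (9.4 * L) = B / (0.94 * L) / 10 by field_simp; ring]
    linarith
  have hwB : B / (9.4 * L) ≤ B / 122 :=
    div_le_div_of_nonneg_left (by positivity) (by norm_num) (by linarith)
  have hD5 : D ≤ 5 * B := by linarith
  have hβ : (D + 1) / μ + D / (ν - D) ≤ 16 * (L / B) := by
    have h1 : (D + 1) / μ ≤ 6 * B / ξ := div_le_div₀ (by positivity) (by linarith) hξ0 hμ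
    have h2 : D / (ν - D) ≤ 5 * B / (ξ / 2) :=
      div_le_div₀ (by positivity) hD5 (by positivity) (by linarith)
    have h3 : B / ξ = L / B := by
      rw [div_eq_div_iff hξ0.ne' (by positivity)]
      linear_combination hB2
    have h4 : 6 * B / ξ + 5 * B / (ξ / 2) = 16 * (B / ξ) := by field_simp; ring
    linarith
  have hβ0 : 0 ≤ (D + 1) / μ + D / (ν - D) := by
    have : 0 ≤ D := by rw [hD]; positivity
    exact add_nonneg (div_nonneg (by linarith) (by linarith)) (div_nonneg this (by linarith))
  have hLB : L / B ≤ 1 / 85 := by rw [div_le_div_iff₀ (by positivity) (by norm_num)]; linarith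
  refine ⟨by linarith, ?_⟩
  calc (w + 2) * ((D + 1) / μ + D / (ν - D)) ≤ (B / (9.4 * L) + 3) * (16 * (L / B)) :=
        mul_le_mul hw2 hβ hβ0 (by positivity)
    _ = 16 / 9.4 + 48 * (L / B) := by field_simp; ring
    _ ≤ 3 := by linarith

end Numerics

lemma binomPMF_le_mul_prGT {n : ℕ} {p L ξ : ℝ} (hp0 : 0 ≤ p) (hp1 : p ≤ 1) (hL : 13 ≤ L)
    (hξ : 8200 * L ≤ ξ) (hξp : 0.89 * ξ ≤ min (p * n) (n - p * n)) {m h : ℕ} (hmh : m ≤ h)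
    (hhm : h ≤ m + 2)
    (hh : (h : ℝ) ≤ p * n + √(22 * (min (p * n) (n - p * n) * L)) + 11 * L + 3) :
    binomPMF n p m ≤ 264 * exp 1 * √(L / ξ) * prGT n p h := by
  set r := √(L / ξ)
  set w := ⌈r⁻¹ / 10⌉₊
  set D := √(22 * (min (p * n) (n - p * n) * L)) + 11 * L + 3 + w
  set X := (w + 2) * ((D + 1) / (p * n) + D / (n - p * n - D))
  obtain ⟨hDν, hX⟩ : D < n - p * n ∧ X ≤ 3 := window_exponent_le hL hξ hξp (min_le_left _ _)
    (min_le_right _ _) (Nat.cast_nonneg w) (Nat.ceil_lt_add_one (by positivity)).le rfl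
  have hwindow : w * (exp (-X) * binomPMF n p m) ≤ prGT n p h :=
    mul_exp_mul_binomPMF_le_prGT hp0 (by positivity)
      (by nlinarith [min_le_left (p * n) (n - p * n)]) hDν hmh hhm (by linarith)
  have hr : 0 < r := sqrt_pos.2 (div_pos (by linarith) (by linarith))
  have hw : 1 ≤ 10 * r * w := by
    have := Nat.le_ceil (r⁻¹ / 10)
    rw [div_le_iff₀ (by norm_num), inv_le_iff_one_le_mul₀ hr] at this
    linarith
  have he : 10 * exp 3 ≤ 264 * exp 1 := by
    rw [show (3 : ℝ) = 1 + 1 + 1 by norm_num, exp_add, exp_add]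
    nlinarith [exp_one_lt_three, exp_pos 1]
  have hpmf := binomPMF_nonneg (n := n) hp0 hp1 m
  calc binomPMF n p m ≤ 10 * r * w * (exp 3 * exp (-X)) * binomPMF n p m :=
        le_mul_of_one_le_left hpmf
          (one_le_mul_of_one_le_of_one_le hw (by rw [← exp_add]; exact one_le_exp (by linarith)))
    _ = 10 * exp 3 * r * (w * (exp (-X) * binomPMF n p m)) := by ring
    _ ≤ 264 * exp 1 * r * prGT n p h := by gcongr

/-- Key technical lemma: let `n ≥ 10^6`, `d_t ~ Bin(n, p_t)` with
`ξ_t = min(μ_t, n−μ_t) ≥ 8200·ln n`, `d_k ~ Bin(n, p_k)` with `μ_k ≤ μ_t`,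
`ℓ ∈ {0,1,2}`, and let `h` be an integer with `h ∈ Z_t` and `h − 2 ∈ Z_k`. Then
`Pr[d_k = h − ℓ] ≤ 264·e·√(ln n / ξ_t) · Pr[d_k > h]`. -/
theorem stmt_9 (n : ℕ) (hn : 10 ^ 6 ≤ n) (pt pk : ℝ)
    (ht0 : 0 ≤ pt) (ht1 : pt ≤ 1) (hk0 : 0 ≤ pk) (hk1 : pk ≤ 1)
    (hξt : 8200 * Real.log n ≤ min (pt * n) ((n : ℝ) - pt * n))
    (hμ : pk * n ≤ pt * n)
    (ℓ : ℕ) (hℓ : ℓ ≤ 2) (h : ℕ)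
    (hZt : Lbound n pt ≤ h ∧ h ≤ Ubound n pt)
    (hZk : (Lbound n pk : ℤ) ≤ (h : ℤ) - 2 ∧ (h : ℤ) - 2 ≤ (Ubound n pk : ℤ)) :
    binomPMF n pk (h - ℓ)
      ≤ 264 * Real.exp 1 * Real.sqrt (Real.log n / min (pt * n) ((n : ℝ) - pt * n))
          * prGT n pk h := by
  set L := log n
  have hn2 : 2 ≤ n := by omega
  have hL : 13 ≤ L := thirteen_le_log (by exact_mod_cast hn)
  have hlow : pt * n - √(22 * (pt * n * L)) ≤ h :=
    (sub_sqrt_le_Lbound hn2 ht0 ht1).trans (by exact_mod_cast hZt.1)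
  have hup : (h : ℝ) ≤ pk * n + √(22 * (min (pk * n) (n - pk * n) * L)) + 11 * L + 3 := by
    have : (h : ℝ) - 2 ≤ Ubound n pk := by exact_mod_cast hZk.2
    linarith [Ubound_le_add hn2 hk0 hk1]
  have hξμt := min_le_left (pt * n) (n - pt * n)
  have hμk : 0.89 * (pt * n) ≤ pk * n := le_of_sub_sqrt_le_add_sqrt hL
    (hξt.trans hξμt) ((min_le_left _ _).trans hμ) (hlow.trans hup)
  have hξk : 0.89 * min (pt * n) (n - pt * n) ≤ min (pk * n) (n - pk * n) :=
    le_min (by linarith) (by linarith [min_le_right (pt * n) (n - pt * n)])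
  exact binomPMF_le_mul_prGT hk0 hk1 hL hξt hξk (Nat.sub_le h ℓ) (by omega) hup
end

section
/- Let n ≥ 10^6, let B ~ Bin(n, 1/2), and let L be the smallest integer c such that Pr[B > c] < 1/(n·√2). Then L ≥ n/2 + √(n·ln n / 6). -/
/-- `L` : the smallest integer `c` such that `Pr[B > c] < 1/(n·√2)`
for `B ~ Bin(n, 1/2)`. -/
noncomputable def Lhalf (n : ℕ) : ℕ :=
  sInf {c : ℕ | prGT n (1 / 2) c < 1 / ((n : ℝ) * Real.sqrt 2)}

/-- `U` : the smallest integer `c` such that `Pr[B > c] ≤ 1/(3·e²·n·√6)`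
for `B ~ Bin(n, 1/2)`. -/
noncomputable def Uhalf (n : ℕ) : ℕ :=
  sInf {c : ℕ | prGT n (1 / 2) c ≤ 1 / (3 * Real.exp 1 ^ 2 * (n : ℝ) * Real.sqrt 6)}


section AuxStmt11

lemma centralBinom_lower : ∀ m : ℕ, 1 ≤ m → (4:ℝ)^m ≤ 2 * Real.sqrt m * Nat.centralBinom m := by
  intro m hm
  induction m with
  | zero => omega
  | succ k ih =>
    rcases Nat.eq_or_lt_of_le hm with h1 | h1
    · simp [← h1, Nat.centralBinom]
      norm_num [Nat.choose]
    · have hk : 1 ≤ k := by omega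
      have IH := ih hk
      have hkey : (0:ℝ) < (k:ℝ) + 1 := by positivity
      have hrel : ((k:ℝ)+1) * Nat.centralBinom (k+1) = 2 * (2*(k:ℝ)+1) * Nat.centralBinom k := by
        exact_mod_cast congrArg (Nat.cast : ℕ → ℝ) (Nat.succ_mul_centralBinom_succ k)
      have hs : 2*((k:ℝ)+1)*Real.sqrt k ≤ (2*(k:ℝ)+1) * Real.sqrt ((k:ℝ)+1) := by
        have e1 : 2*((k:ℝ)+1)*Real.sqrt k = Real.sqrt (4*((k:ℝ)+1)^2*(k:ℝ)) := by
          rw [Real.sqrt_mul (by positivity)]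
          rw [show 4*((k:ℝ)+1)^2 = (2*((k:ℝ)+1))^2 by ring, Real.sqrt_sq (by positivity)]
        have e2 : (2*(k:ℝ)+1) * Real.sqrt ((k:ℝ)+1) = Real.sqrt ((2*(k:ℝ)+1)^2*((k:ℝ)+1)) := by
          rw [Real.sqrt_mul (by positivity), Real.sqrt_sq (by positivity)]
        rw [e1, e2]
        apply Real.sqrt_le_sqrt
        nlinarith [sq_nonneg ((k:ℝ))]
      have hC0 : (0:ℝ) ≤ (Nat.centralBinom k : ℝ) := by positivity
      have hC1 : (Nat.centralBinom (k+1):ℝ) = 2 * (2*(k:ℝ)+1) * Nat.centralBinom k / ((k:ℝ)+1) := by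
        field_simp
        linarith [hrel]
      push_cast
      have h2 := mul_le_mul_of_nonneg_left hs (show (0:ℝ) ≤ 4*(Nat.centralBinom k:ℝ) by positivity)
      have h3 := mul_le_mul_of_nonneg_left IH (show (0:ℝ) ≤ 4*((k:ℝ)+1) by positivity)
      have goal2 : ((k:ℝ)+1) * (4:ℝ)^(k+1) ≤ ((k:ℝ)+1) * (2*Real.sqrt ((k:ℝ)+1)*(Nat.centralBinom (k+1):ℝ)) := by
        have e : ((k:ℝ)+1) * (2*Real.sqrt ((k:ℝ)+1)*(Nat.centralBinom (k+1):ℝ))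
            = 2*Real.sqrt ((k:ℝ)+1) * (((k:ℝ)+1)*(Nat.centralBinom (k+1):ℝ)) := by ring
        rw [e, hrel, pow_succ]
        nlinarith [h2, h3]
      exact le_of_mul_le_mul_left goal2 hkey

lemma choose_half_lower (n : ℕ) (hn : 1 ≤ n) : (2:ℝ)^n ≤ 2 * Real.sqrt n * n.choose (n/2) := by
  rcases Nat.even_or_odd n with ⟨m, hm⟩ | ⟨m, hm⟩
  · -- n = 2m
    subst hm
    have hm1 : 1 ≤ m := by omega
    have h := centralBinom_lower m hm1
    have hd : (m + m) / 2 = m := by omega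
    rw [hd]
    have hcb : (m+m).choose m = Nat.centralBinom m := by
      rw [Nat.centralBinom]; congr 1; omega
    rw [hcb]
    have h4 : (2:ℝ)^(m+m) = 4^m := by
      rw [show m + m = 2*m by ring, pow_mul]; norm_num
    rw [h4]
    push_cast
    have h5 : Real.sqrt (m:ℝ) ≤ Real.sqrt ((m:ℝ)+(m:ℝ)) :=
      Real.sqrt_le_sqrt (by linarith [show (0:ℝ) ≤ (m:ℝ) from Nat.cast_nonneg m])
    have h6 : (0:ℝ) ≤ (Nat.centralBinom m:ℝ) := by positivity
    nlinarith [h, h5, h6]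
  · -- n = 2m+1
    subst hm
    rcases Nat.eq_zero_or_pos m with rfl | hm1
    · norm_num
    have h := centralBinom_lower m hm1
    have hd : (2*m + 1) / 2 = m := by omega
    rw [hd]
    -- (m+1) * C(2m+1, m) = (2m+1) * C(2m, m)
    have hrel : (m+1) * (2*m+1).choose m = (2*m+1) * Nat.centralBinom m := by
      have h1 := Nat.add_one_mul_choose_eq (2*m) m
      have h2 : (2*m+1).choose (m+1) = (2*m+1).choose m := by
        rw [← Nat.choose_symm (by omega : m + 1 ≤ 2*m+1)]
        congr 1; omega
      rw [h2] at h1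
      rw [Nat.centralBinom, mul_comm (m+1)]
      rw [← h1]
    have hrelR : ((m:ℝ)+1) * ((2*m+1).choose m : ℝ) = (2*(m:ℝ)+1) * (Nat.centralBinom m : ℝ) := by
      exact_mod_cast congrArg (Nat.cast : ℕ → ℝ) hrel
    have hkey : (0:ℝ) < (m:ℝ)+1 := by positivity
    have goal2 : ((m:ℝ)+1) * (2:ℝ)^(2*m+1) ≤ ((m:ℝ)+1) * (2 * Real.sqrt (2*(m:ℝ)+1) * ((2*m+1).choose m : ℝ)) := by
      have e : ((m:ℝ)+1) * (2 * Real.sqrt (2*(m:ℝ)+1) * ((2*m+1).choose m : ℝ))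
          = 2 * Real.sqrt (2*(m:ℝ)+1) * (((m:ℝ)+1) * ((2*m+1).choose m : ℝ)) := by ring
      rw [e, hrelR]
      have h4 : (2:ℝ)^(2*m+1) = 2 * 4^m := by
        rw [pow_succ, pow_mul]; norm_num; ring
      rw [h4]
      -- need: (m+1) * 2 * 4^m ≤ 2√(2m+1) * ((2m+1) C)
      -- from h: 4^m ≤ 2√m C; so (m+1)*2*4^m ≤ 4(m+1)√m C; need 4(m+1)√m ≤ 2(2m+1)√(2m+1)
      have hs : 2*((m:ℝ)+1)*Real.sqrt m ≤ (2*(m:ℝ)+1) * Real.sqrt (2*(m:ℝ)+1) := by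
        have e1 : 2*((m:ℝ)+1)*Real.sqrt m = Real.sqrt (4*((m:ℝ)+1)^2*(m:ℝ)) := by
          rw [Real.sqrt_mul (by positivity)]
          rw [show 4*((m:ℝ)+1)^2 = (2*((m:ℝ)+1))^2 by ring, Real.sqrt_sq (by positivity)]
        have e2 : (2*(m:ℝ)+1) * Real.sqrt (2*(m:ℝ)+1) = Real.sqrt ((2*(m:ℝ)+1)^2*(2*(m:ℝ)+1)) := by
          rw [Real.sqrt_mul (by positivity), Real.sqrt_sq (by positivity)]
        rw [e1, e2]
        apply Real.sqrt_le_sqrt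
        nlinarith [sq_nonneg ((m:ℝ)), sq_nonneg ((m:ℝ)-1)]
      have hC0 : (0:ℝ) ≤ (Nat.centralBinom m : ℝ) := by positivity
      have h2 := mul_le_mul_of_nonneg_left hs (show (0:ℝ) ≤ 2*(Nat.centralBinom m:ℝ) by positivity)
      have h3 := mul_le_mul_of_nonneg_left h (show (0:ℝ) ≤ 2*((m:ℝ)+1) by positivity)
      nlinarith [h2, h3]
    have := le_of_mul_le_mul_left goal2 hkey
    calc (2:ℝ)^(2*m+1) ≤ 2 * Real.sqrt (2*(m:ℝ)+1) * ((2*m+1).choose m : ℝ) := this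
      _ = 2 * Real.sqrt ((2*m+1 : ℕ):ℝ) * ((2*m+1).choose m : ℝ) := by push_cast; ring_nf


lemma exp_neg_ratio (d x : ℝ) (hd : 0 < d) (hx : 0 ≤ x) :
    Real.exp (-x / d) ≤ d / (d + x) := by
  have h1 : 1 + x/d ≤ Real.exp (x/d) := by
    have := Real.add_one_le_exp (x/d); linarith
  have h2 : Real.exp (-x/d) = (Real.exp (x/d))⁻¹ := by
    rw [neg_div, Real.exp_neg]
  have h3 : (0:ℝ) < 1 + x/d := by positivity
  have h4 : (Real.exp (x/d))⁻¹ ≤ (1 + x/d)⁻¹ := by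
    apply inv_anti₀ h3 h1
  have h5 : (1 + x/d)⁻¹ = d / (d + x) := by
    rw [show 1 + x/d = (d+x)/d by field_simp]
    rw [inv_div]
  rw [h2, ← h5]; exact h4

lemma choose_shift_lower (n m : ℕ) (h2m : 2*m ≤ n) :
    ∀ s : ℕ, s ≤ m → m + s ≤ n →
    (n.choose m : ℝ) * Real.exp (-(s:ℝ)^2 / ((m:ℝ) + 1 - s)) ≤ (n.choose (m + s) : ℝ) := by
  intro s
  induction s with
  | zero => intro _ _; simp
  | succ s ih =>
    intro hsm hmn
    have hsm' : s ≤ m := by omega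
    have hmn' : m + s ≤ n := by omega
    have IH := ih hsm' hmn'
    have hd1 : (1:ℝ) ≤ (m:ℝ) - s := by
      have : (s:ℝ) + 1 ≤ (m:ℝ) := by exact_mod_cast hsm
      linarith
    have hd0 : (0:ℝ) < (m:ℝ) - s := by linarith
    have hden : (0:ℝ) < (m:ℝ) + s + 1 := by positivity
    have hid : (n.choose (m+s+1) : ℝ) * ((m:ℝ)+s+1) = (n.choose (m+s) : ℝ) * ((n:ℝ) - (m+s)) := by
      have h := Nat.choose_succ_right_eq n (m+s)
      have hcast := congrArg (Nat.cast : ℕ → ℝ) h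
      push_cast [Nat.cast_sub hmn'] at hcast
      push_cast
      linarith [hcast]
    have hCn : (0:ℝ) ≤ (n.choose (m+s) : ℝ) := by positivity
    have hCm : (0:ℝ) ≤ (n.choose m : ℝ) := by positivity
    have hC1 : (n.choose (m+s+1):ℝ) = (n.choose (m+s):ℝ) * ((n:ℝ)-((m:ℝ)+s)) / ((m:ℝ)+s+1) := by
      field_simp
      push_cast at hid
      linarith [hid]
    have hfac : (m:ℝ) - s ≤ (n:ℝ) - ((m:ℝ)+s) := by
      have : (2*m : ℝ) ≤ (n:ℝ) := by exact_mod_cast h2m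
      linarith
    have hexp : Real.exp (-(2*(s:ℝ)+1) / ((m:ℝ) - s)) ≤ ((m:ℝ) - s)/((m:ℝ)+s+1) := by
      have := exp_neg_ratio ((m:ℝ)-s) (2*(s:ℝ)+1) hd0 (by positivity)
      calc Real.exp (-(2*(s:ℝ)+1) / ((m:ℝ) - s)) ≤ ((m:ℝ)-s)/(((m:ℝ)-s) + (2*(s:ℝ)+1)) := this
        _ = ((m:ℝ) - s)/((m:ℝ)+s+1) := by ring_nf
    -- exponent splitting
    have hsplit : Real.exp (-((s:ℝ)+1)^2 / ((m:ℝ)-s))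
        = Real.exp (-(s:ℝ)^2 / ((m:ℝ)-s)) * Real.exp (-(2*(s:ℝ)+1) / ((m:ℝ)-s)) := by
      rw [← Real.exp_add]
      congr 1
      field_simp
      ring
    have hmono : Real.exp (-(s:ℝ)^2 / ((m:ℝ)-s)) ≤ Real.exp (-(s:ℝ)^2 / ((m:ℝ)+1-s)) := by
      apply Real.exp_le_exp.mpr
      rw [neg_div, neg_div, neg_le_neg_iff]
      apply div_le_div_of_nonneg_left (sq_nonneg _) hd0 (by linarith)
    -- assemble
    have step1 : (n.choose m : ℝ) * Real.exp (-((s:ℝ)+1)^2 / ((m:ℝ)-s))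
        ≤ (n.choose (m+s) : ℝ) * Real.exp (-(2*(s:ℝ)+1) / ((m:ℝ)-s)) := by
      rw [hsplit]
      have e1 : (n.choose m : ℝ) * (Real.exp (-(s:ℝ)^2 / ((m:ℝ)-s)) * Real.exp (-(2*(s:ℝ)+1) / ((m:ℝ)-s)))
          ≤ (n.choose m : ℝ) * (Real.exp (-(s:ℝ)^2 / ((m:ℝ)+1-s)) * Real.exp (-(2*(s:ℝ)+1) / ((m:ℝ)-s))) := by
        apply mul_le_mul_of_nonneg_left _ hCm
        exact mul_le_mul_of_nonneg_right hmono (Real.exp_pos _).le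
      calc (n.choose m : ℝ) * (Real.exp (-(s:ℝ)^2 / ((m:ℝ)-s)) * Real.exp (-(2*(s:ℝ)+1) / ((m:ℝ)-s)))
          ≤ (n.choose m : ℝ) * (Real.exp (-(s:ℝ)^2 / ((m:ℝ)+1-s)) * Real.exp (-(2*(s:ℝ)+1) / ((m:ℝ)-s))) := e1
        _ = ((n.choose m : ℝ) * Real.exp (-(s:ℝ)^2 / ((m:ℝ)+1-s))) * Real.exp (-(2*(s:ℝ)+1) / ((m:ℝ)-s)) := by ring
        _ ≤ (n.choose (m+s) : ℝ) * Real.exp (-(2*(s:ℝ)+1) / ((m:ℝ)-s)) :=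
            mul_le_mul_of_nonneg_right IH (Real.exp_pos _).le
    have step2 : (n.choose (m+s) : ℝ) * Real.exp (-(2*(s:ℝ)+1) / ((m:ℝ)-s))
        ≤ (n.choose (m+s+1) : ℝ) := by
      rw [hC1]
      calc (n.choose (m+s) : ℝ) * Real.exp (-(2*(s:ℝ)+1) / ((m:ℝ)-s))
          ≤ (n.choose (m+s) : ℝ) * (((m:ℝ) - s)/((m:ℝ)+s+1)) := mul_le_mul_of_nonneg_left hexp hCn
        _ ≤ (n.choose (m+s) : ℝ) * (((n:ℝ)-((m:ℝ)+s))/((m:ℝ)+s+1)) := by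
            apply mul_le_mul_of_nonneg_left _ hCn
            gcongr
        _ = (n.choose (m+s):ℝ) * ((n:ℝ)-((m:ℝ)+s)) / ((m:ℝ)+s+1) := by ring
    have final := le_trans step1 step2
    have ecast : ((Nat.succ s : ℕ):ℝ) = (s:ℝ) + 1 := by push_cast; ring
    calc (n.choose m : ℝ) * Real.exp (-((s+1:ℕ):ℝ)^2 / ((m:ℝ) + 1 - ((s+1:ℕ):ℝ)))
        = (n.choose m : ℝ) * Real.exp (-((s:ℝ)+1)^2 / ((m:ℝ)-s)) := by
          push_cast
          ring_nf
      _ ≤ (n.choose (m+s+1) : ℝ) := final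
      _ = (n.choose (m + (s+1)) : ℝ) := by rw [← Nat.add_assoc]

end AuxStmt11

set_option maxHeartbeats 1000000 in
/-- For `n ≥ 10^6` and `B ~ Bin(n, 1/2)`, the threshold `L` satisfies
`L ≥ n/2 + √(n·ln n / 6)`. -/
theorem stmt_11 (n : ℕ) (hn : 10 ^ 6 ≤ n) :
    (Lhalf n : ℝ) ≥ (n : ℝ) / 2 + Real.sqrt ((n : ℝ) * Real.log n / 6) := by
  have hN : (10^6:ℝ) ≤ (n:ℝ) := by exact_mod_cast hn
  have hn0 : (0:ℝ) < (n:ℝ) := by norm_num at hN ⊢; linarith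
  set L := Real.log n with hLdef
  set t := Real.sqrt ((n:ℝ) * Real.log n / 6) with htdef
  -- log lower bound
  have hL13 : (13:ℝ) ≤ L := by
    rw [hLdef, Real.le_log_iff_exp_le hn0]
    have h1 : Real.exp 1 ≤ 2.7182818286 := le_of_lt Real.exp_one_lt_d9
    have h2 : Real.exp (13:ℝ) = Real.exp 1 ^ (13:ℕ) := by
      rw [← Real.exp_nat_mul]; norm_num
    calc Real.exp (13:ℝ) = Real.exp 1 ^ (13:ℕ) := h2
      _ ≤ 2.7182818286^(13:ℕ) := pow_le_pow_left₀ (Real.exp_pos 1).le h1 13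
      _ ≤ 10^6 := by norm_num
      _ ≤ (n:ℝ) := hN
  have hL0 : (0:ℝ) < L := by linarith
  -- sqrt n bounds
  have hsq_lb : (1000:ℝ) ≤ Real.sqrt n := by
    rw [show (1000:ℝ) = Real.sqrt (1000^2) from (Real.sqrt_sq (by norm_num)).symm]
    apply Real.sqrt_le_sqrt; norm_num; linarith
  have hsqn : Real.sqrt n * Real.sqrt n = (n:ℝ) := Real.mul_self_sqrt hn0.le
  have hsq_ub : Real.sqrt n ≤ (n:ℝ)/1000 := by nlinarith [Real.sqrt_nonneg (n:ℝ)]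
  -- log upper bound
  have hL_ub : L ≤ (n:ℝ)/500 := by
    have h1 : Real.log (Real.sqrt n) = L / 2 := Real.log_sqrt hn0.le
    have h2 : Real.log (Real.sqrt n) ≤ Real.sqrt n - 1 :=
      Real.log_le_sub_one_of_pos (by linarith)
    linarith
  -- t facts
  have ht0 : 0 ≤ t := Real.sqrt_nonneg _
  have ht2 : t^2 = (n:ℝ)*L/6 := Real.sq_sqrt (by positivity)
  have ht_ub : t ≤ (n:ℝ)/54 := by
    have h1 : (n:ℝ)*L/6 ≤ ((n:ℝ)/54)^2 := by nlinarith
    rw [htdef]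
    calc Real.sqrt ((n:ℝ)*Real.log n/6) ≤ Real.sqrt (((n:ℝ)/54)^2) := Real.sqrt_le_sqrt h1
      _ = (n:ℝ)/54 := Real.sqrt_sq (by positivity)
  have ht_lb : (1000:ℝ) ≤ t := by
    rw [htdef, show (1000:ℝ) = Real.sqrt (1000^2) from (Real.sqrt_sq (by norm_num)).symm]
    apply Real.sqrt_le_sqrt
    nlinarith
  -- m and s
  have hceil : (⌈t⌉₊:ℝ) ≤ t + 1 := le_of_lt (Nat.ceil_lt_add_one ht0)
  set m := n / 2 with hmdef
  set s := ⌈t⌉₊ + 1 with hsdef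
  have h2m : 2*m ≤ n := by omega
  have h2m' : n ≤ 2*m+1 := by omega
  have hmR_lb : ((n:ℝ)-1)/2 ≤ (m:ℝ) := by
    have : ((n:ℕ):ℝ) ≤ ((2*m+1:ℕ):ℝ) := by exact_mod_cast h2m'
    push_cast at this; linarith
  have hmR_ub : (m:ℝ) ≤ (n:ℝ)/2 := by
    have : ((2*m:ℕ):ℝ) ≤ ((n:ℕ):ℝ) := by exact_mod_cast h2m
    push_cast at this; linarith
  have hsR_ub : (s:ℝ) ≤ t + 2 := by
    have := Nat.ceil_lt_add_one ht0
    rw [hsdef]; push_cast; linarith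
  have hsR_lb : t + 1 ≤ (s:ℝ) := by
    have := Nat.le_ceil t
    rw [hsdef]; push_cast; linarith
  have hs_le_m : s ≤ m := by
    have : (s:ℝ) ≤ (m:ℝ) := by linarith
    exact_mod_cast this
  have hKn : m + s ≤ n := by
    have : ((m+s:ℕ):ℝ) ≤ (n:ℝ) := by push_cast; linarith
    exact_mod_cast this
  -- A and E
  set A := (L - Real.log 2)/2 with hAdef
  set E := (s:ℝ)^2/((m:ℝ)+1-(s:ℝ)) with hEdef
  have hlog2 : Real.log 2 < 0.7 := by
    have := Real.log_two_lt_d9; linarith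
  have hlog2' : (0:ℝ) < Real.log 2 := Real.log_pos (by norm_num)
  have hA6 : (6:ℝ) ≤ A := by rw [hAdef]; linarith
  have hDpos : (0:ℝ) < (n:ℝ)/2 - t - 2 := by linarith
  have hD_lb : (n:ℝ)/2 - t - 2 ≤ (m:ℝ)+1-(s:ℝ) := by linarith
  have hEA : E ≤ A := by
    have key : (t+2)^2 ≤ A * ((n:ℝ)/2 - t - 2) := by
      have p1 : (0:ℝ) ≤ (n:ℝ)*(L-13) := mul_nonneg hn0.le (by linarith)
      have p2 : (0:ℝ) ≤ (n:ℝ)*(0.7-Real.log 2) := mul_nonneg hn0.le (by linarith)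
      have k1 : (t+2)^2 ≤ 0.4*A*(n:ℝ) := by
        have e : (t+2)^2 = t^2 + 4*t + 4 := by ring
        rw [e, ht2, hAdef]
        nlinarith [p1, p2, ht_ub, hN]
      have k2 : A * (t+2) ≤ A * ((n:ℝ)/10) := by
        apply mul_le_mul_of_nonneg_left _ (by linarith)
        linarith
      nlinarith [k1, k2]
    have e1 : E ≤ (t+2)^2/((n:ℝ)/2 - t - 2) := by
      rw [hEdef]
      apply div_le_div₀ (by positivity) _ hDpos hD_lb
      have hs0 : (0:ℝ) ≤ (s:ℝ) := by positivity
      nlinarith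
    have e2 : (t+2)^2/((n:ℝ)/2 - t - 2) ≤ A := by
      rw [div_le_iff₀ hDpos]; linarith [key]
    linarith
  have hexpA : Real.exp A = Real.sqrt ((n:ℝ)/2) := by
    have h1 : Real.log (Real.sqrt ((n:ℝ)/2)) = Real.log ((n:ℝ)/2) / 2 :=
      Real.log_sqrt (by positivity)
    have h2 : Real.log ((n:ℝ)/2) = L - Real.log 2 := by
      rw [hLdef, Real.log_div (ne_of_gt hn0) (by norm_num)]
    have h3 : A = Real.log (Real.sqrt ((n:ℝ)/2)) := by rw [h1, h2, hAdef]
    rw [h3, Real.exp_log (Real.sqrt_pos.mpr (by positivity))]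
  -- base identity 1/(n√2) = exp(-A)/(2√n)
  have hs2 : Real.sqrt 2 * Real.sqrt 2 = 2 := Real.mul_self_sqrt (by norm_num)
  have hs2pos : (0:ℝ) < Real.sqrt 2 := Real.sqrt_pos.mpr (by norm_num)
  have hsqhalf : Real.sqrt ((n:ℝ)/2) * Real.sqrt 2 = Real.sqrt n := by
    rw [← Real.sqrt_mul (by positivity)]
    congr 1; field_simp
  have hsqhalf_pos : (0:ℝ) < Real.sqrt ((n:ℝ)/2) := Real.sqrt_pos.mpr (by positivity)
  have hprod : Real.sqrt ((n:ℝ)/2) * (2*Real.sqrt n) = (n:ℝ)*Real.sqrt 2 := by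
    have e1 : Real.sqrt ((n:ℝ)/2) * (2 * Real.sqrt n)
        = Real.sqrt ((n:ℝ)/2) * ((Real.sqrt 2 * Real.sqrt 2) * Real.sqrt n) := by rw [hs2]
    rw [e1, show Real.sqrt ((n:ℝ)/2) * ((Real.sqrt 2 * Real.sqrt 2) * Real.sqrt n)
        = (Real.sqrt ((n:ℝ)/2) * Real.sqrt 2) * (Real.sqrt 2 * Real.sqrt n) by ring, hsqhalf,
      show Real.sqrt (n:ℝ) * (Real.sqrt 2 * Real.sqrt n)
        = (Real.sqrt (n:ℝ) * Real.sqrt n) * Real.sqrt 2 by ring, hsqn]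
  have hbase : 1/((n:ℝ)*Real.sqrt 2) = Real.exp (-A)/(2*Real.sqrt n) := by
    rw [Real.exp_neg, hexpA]
    rw [show (Real.sqrt ((n:ℝ)/2))⁻¹/(2*Real.sqrt n)
        = 1/(Real.sqrt ((n:ℝ)/2)*(2*Real.sqrt n)) by field_simp, hprod]
  -- the key claim
  have claim : ∀ c : ℕ, (c:ℝ) < (n:ℝ)/2 + t → 1/((n:ℝ)*Real.sqrt 2) ≤ prGT n (1/2) c := by
    intro c hc
    have hcK : c + 1 ≤ m + s := by
      have : (c:ℝ) < ((m+s:ℕ):ℝ) := by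
        push_cast
        have := Nat.le_ceil t
        linarith
      have := (Nat.cast_lt (α := ℝ)).mp this
      omega
    have hmem : m + s ∈ Finset.Icc (c+1) n := Finset.mem_Icc.mpr ⟨hcK, hKn⟩
    have hterm : binomPMF n (1/2) (m+s) ≤ prGT n (1/2) c := by
      apply Finset.single_le_sum _ hmem
      intro k _
      unfold binomPMF
      positivity
    have hpmf : binomPMF n (1/2) (m+s) = (n.choose (m+s):ℝ) * (1/2:ℝ)^n := by
      unfold binomPMF
      rw [show (1 - 1/2 : ℝ) = 1/2 by norm_num, mul_assoc, ← pow_add,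
        Nat.add_sub_cancel' hKn]
    have hhalfpow : (1/2:ℝ)^n = 1/2^n := by rw [div_pow, one_pow]
    have hchoosem := choose_half_lower n (by omega)
    have hshift := choose_shift_lower n m h2m s hs_le_m hKn
    have hBineq : (1:ℝ)/(2*Real.sqrt n) ≤ (n.choose m:ℝ) * (1/2:ℝ)^n := by
      rw [hhalfpow, mul_one_div, div_le_div_iff₀ (by positivity) (by positivity)]
      calc (1:ℝ) * 2^n = 2^n := by ring
        _ ≤ 2 * Real.sqrt n * (n.choose (n/2)) := hchoosem
        _ = (n.choose m) * (2*Real.sqrt n) := by rw [hmdef]; ring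
    calc 1/((n:ℝ)*Real.sqrt 2) = Real.exp (-A)/(2*Real.sqrt n) := hbase
      _ ≤ Real.exp (-E)/(2*Real.sqrt n) := by
          gcongr
      _ = Real.exp (-E) * (1/(2*Real.sqrt n)) := by ring
      _ ≤ Real.exp (-E) * ((n.choose m:ℝ) * (1/2:ℝ)^n) :=
          mul_le_mul_of_nonneg_left hBineq (Real.exp_pos _).le
      _ = ((n.choose m:ℝ) * Real.exp (-E)) * (1/2:ℝ)^n := by ring
      _ ≤ (n.choose (m+s):ℝ) * (1/2:ℝ)^n := by
          apply mul_le_mul_of_nonneg_right _ (by positivity)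
          have : -E = -(s:ℝ)^2/((m:ℝ)+1-(s:ℝ)) := by rw [hEdef]; ring
          rw [this]; exact hshift
      _ = binomPMF n (1/2) (m+s) := hpmf.symm
      _ ≤ prGT n (1/2) c := hterm
  -- conclude
  have hSne : {c : ℕ | prGT n (1 / 2) c < 1 / ((n : ℝ) * Real.sqrt 2)}.Nonempty := by
    refine ⟨n, ?_⟩
    have : prGT n (1/2) n = 0 := by
      unfold prGT
      rw [Finset.Icc_eq_empty (by omega)]
      simp
    rw [Set.mem_setOf_eq, this]
    positivity
  have hmemL : Lhalf n ∈ {c : ℕ | prGT n (1 / 2) c < 1 / ((n : ℝ) * Real.sqrt 2)} :=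
    Nat.sInf_mem hSne
  by_contra hcon
  push_neg at hcon
  have := claim (Lhalf n) hcon
  rw [Set.mem_setOf_eq] at hmemL
  linarith
end

section
/- Let n ≥ 10^6, let B ~ Bin(n, 1/2), and let U be the smallest integer c such that Pr[B > c] ≤ 1/(3·e²·n·√6). Then Pr[B = U] ≤ (8/(3·e·√6)) · √(ln n) / n^{3/2}. -/
open Real Finset

lemma binomPMF_half (n k : ℕ) : binomPMF n (1 / 2) k = n.choose k / 2 ^ n := by
  rcases le_or_gt k n with hk | hk
  · rw [binomPMF, show (1 : ℝ) - 1 / 2 = 1 / 2 by norm_num, mul_assoc, ← pow_add,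
      Nat.add_sub_cancel' hk, div_pow, one_pow, mul_one_div]
  · simp [binomPMF, Nat.choose_eq_zero_of_lt hk]

lemma binomPMF_half_nonneg (n k : ℕ) : 0 ≤ binomPMF n (1 / 2) k := by
  rw [binomPMF_half]; positivity

lemma binomPMF_half_of_lt {n k : ℕ} (hk : n < k) : binomPMF n (1 / 2) k = 0 := by
  rw [binomPMF_half, Nat.choose_eq_zero_of_lt hk, Nat.cast_zero, zero_div]

lemma binomPMF_half_succ_mul (n k : ℕ) :
    binomPMF n (1 / 2) (k + 1) * (k + 1) = binomPMF n (1 / 2) k * (n - k) := by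
  rcases le_or_gt k n with hk | hk
  · have h := congrArg (Nat.cast (R := ℝ)) (Nat.choose_succ_right_eq n k)
    push_cast [hk] at h
    rw [binomPMF_half, binomPMF_half, div_mul_eq_mul_div, h, mul_div_right_comm]
  · rw [binomPMF_half_of_lt hk, binomPMF_half_of_lt (hk.trans k.lt_succ_self), zero_mul, zero_mul]

lemma binomPMF_half_succ_le {n k : ℕ} (hk : n ≤ 2 * k + 1) :
    binomPMF n (1 / 2) (k + 1) ≤ binomPMF n (1 / 2) k := by
  have hk' : (n : ℝ) - k ≤ k + 1 := by
    have : (n : ℝ) ≤ 2 * k + 1 := by exact_mod_cast hk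
    linarith
  refine le_of_mul_le_mul_right ?_ (by positivity : (0 : ℝ) < k + 1)
  rw [binomPMF_half_succ_mul]
  exact mul_le_mul_of_nonneg_left hk' (binomPMF_half_nonneg n k)

lemma binomPMF_half_le_of_le {n a b : ℕ} (ha : n ≤ 2 * a + 1) (hab : a ≤ b) :
    binomPMF n (1 / 2) b ≤ binomPMF n (1 / 2) a := by
  induction b, hab using Nat.le_induction with
  | base => exact le_rfl
  | succ b hab ih => exact (binomPMF_half_succ_le (by omega)).trans ih

lemma inv_succ_le_binomPMF_half_middle (n : ℕ) :
    1 / ((n : ℝ) + 1) ≤ binomPMF n (1 / 2) (n / 2) := by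
  have hsum : 2 ^ n ≤ (n + 1) * n.choose (n / 2) := by
    calc 2 ^ n = ∑ i ∈ range (n + 1), n.choose i := (Nat.sum_range_choose n).symm
      _ ≤ ∑ _i ∈ range (n + 1), n.choose (n / 2) :=
        sum_le_sum fun i _ => Nat.choose_le_middle i n
      _ = (n + 1) * n.choose (n / 2) := by rw [sum_const, card_range, smul_eq_mul]
  rw [binomPMF_half, div_le_div_iff₀ (by positivity) (by positivity), one_mul, mul_comm]
  exact_mod_cast hsum

lemma binomPMF_half_add_le_exp (n j : ℕ) :
    binomPMF n (1 / 2) (n / 2 + j) ≤ exp (-((j : ℝ) * (j - 1)) / (n + 1)) := by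
  have hle_half : (n : ℝ) + 1 ≤ 2 * (n / 2 : ℕ) + 2 := by
    have : n + 1 ≤ 2 * (n / 2) + 2 := by omega
    exact_mod_cast this
  have hhalf_le : 2 * ((n / 2 : ℕ) : ℝ) ≤ n := by
    have : 2 * (n / 2) ≤ n := by omega
    exact_mod_cast this
  induction j with
  | zero =>
    rw [binomPMF_half, Nat.cast_zero, zero_mul, neg_zero, zero_div, exp_zero]
    exact div_le_one_of_le₀ (by exact_mod_cast Nat.choose_le_two_pow n (n / 2)) (by positivity)
  | succ j ih =>
    set P : ℝ := ((n : ℝ) + 1) / 2 with hP_def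
    have hP : 0 < P := by positivity
    -- with `k = ⌊n/2⌋ + j`: `k + 1 ≥ P`, `n - k ≤ P - j` and `(P - j)/P = 1 - 2j/(n+1)`
    have hstep : binomPMF n (1 / 2) (n / 2 + j + 1) * P
        ≤ binomPMF n (1 / 2) (n / 2 + j) * (P * exp (-(2 * j) / (n + 1))) := by
      calc binomPMF n (1 / 2) (n / 2 + j + 1) * P
          ≤ binomPMF n (1 / 2) (n / 2 + j + 1) * ((n / 2 + j : ℕ) + 1) := by
            gcongr
            · exact binomPMF_half_nonneg _ _
            · push_cast; linarith [hP_def, (j.cast_nonneg : (0 : ℝ) ≤ j)]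
        _ = binomPMF n (1 / 2) (n / 2 + j) * (n - (n / 2 + j : ℕ)) := binomPMF_half_succ_mul _ _
        _ ≤ binomPMF n (1 / 2) (n / 2 + j) * (P * (-(2 * j) / (n + 1) + 1)) := by
            gcongr
            · exact binomPMF_half_nonneg _ _
            · push_cast
              rw [show P * (-(2 * (j : ℝ)) / (n + 1) + 1) = P - j by
                field_simp; ring]
              linarith [hP_def]
        _ ≤ _ := by gcongr; exacts [binomPMF_half_nonneg _ _, add_one_le_exp _]
    calc binomPMF n (1 / 2) (n / 2 + (j + 1))
        ≤ binomPMF n (1 / 2) (n / 2 + j) * exp (-(2 * j) / (n + 1)) := by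
          rw [← add_assoc, ← mul_le_mul_iff_left₀ hP]
          linarith
      _ ≤ exp (-((j : ℝ) * (j - 1)) / (n + 1)) * exp (-(2 * j) / (n + 1)) := by
          gcongr
      _ = exp (-(((j + 1 : ℕ) : ℝ) * ((j + 1 : ℕ) - 1)) / (n + 1)) := by
          rw [← exp_add]; congr 1; push_cast; ring

lemma prGT_le_mul_binomPMF_half_succ {n c : ℕ} (hc : n ≤ 2 * c + 1) :
    prGT n (1 / 2) c ≤ n * binomPMF n (1 / 2) (c + 1) := by
  calc prGT n (1 / 2) c ≤ #(Icc (c + 1) n) • binomPMF n (1 / 2) (c + 1) :=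
        sum_le_card_nsmul _ _ _ fun k hk =>
          binomPMF_half_le_of_le (by omega) (mem_Icc.mp hk).1
    _ ≤ n * binomPMF n (1 / 2) (c + 1) := by
        rw [nsmul_eq_mul, Nat.card_Icc]
        gcongr
        · exact binomPMF_half_nonneg _ _
        · exact_mod_cast Nat.sub_le_of_le_add (by omega)

lemma mul_binomPMF_half_le_prGT {n c : ℕ} (hc : n ≤ 2 * c + 1) (m : ℕ) :
    m * binomPMF n (1 / 2) (c + m) ≤ prGT n (1 / 2) c := by
  have hprGT : 0 ≤ prGT n (1 / 2) c := sum_nonneg fun k _ => binomPMF_half_nonneg n k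
  rcases lt_or_ge n (c + m) with hm | hm
  · rwa [binomPMF_half_of_lt hm, mul_zero]
  calc (m : ℝ) * binomPMF n (1 / 2) (c + m)
      = #(Icc (c + 1) (c + m)) • binomPMF n (1 / 2) (c + m) := by
        rw [nsmul_eq_mul, Nat.card_Icc, show c + m + 1 - (c + 1) = m by omega]
    _ ≤ ∑ k ∈ Icc (c + 1) (c + m), binomPMF n (1 / 2) k :=
        card_nsmul_le_sum _ _ _ fun k hk =>
          binomPMF_half_le_of_le (by have := (mem_Icc.mp hk).1; omega) (mem_Icc.mp hk).2
    _ ≤ prGT n (1 / 2) c :=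
        sum_le_sum_of_subset_of_nonneg (Icc_subset_Icc_right hm)
          fun k _ _ => binomPMF_half_nonneg n k

lemma prGT_Uhalf_le (n : ℕ) :
    prGT n (1 / 2) (Uhalf n) ≤ 1 / (3 * exp 1 ^ 2 * (n : ℝ) * √6) := by
  refine Nat.sInf_mem (s := {c | prGT n (1 / 2) c ≤ _}) ⟨n, ?_⟩
  rw [Set.mem_ofPred_eq, prGT, Icc_eq_empty (by omega), sum_empty]
  positivity

lemma Uhalf_le_of_prGT_le {n c : ℕ}
    (hc : prGT n (1 / 2) c ≤ 1 / (3 * exp 1 ^ 2 * (n : ℝ) * √6)) : Uhalf n ≤ c :=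
  Nat.sInf_le hc

lemma le_two_mul_Uhalf_add_one {n : ℕ} (hn : 0 < n) : n ≤ 2 * Uhalf n + 1 := by
  by_contra! h
  have hthreshold : 1 / (3 * exp 1 ^ 2 * (n : ℝ) * √6) < 1 / ((n : ℝ) + 1) := by
    have he : 2 ≤ exp 1 := by linarith [add_one_le_exp 1]
    have h6 : 1 ≤ √6 := Real.one_le_sqrt.mpr (by norm_num)
    have hn' : (1 : ℝ) ≤ n := by exact_mod_cast hn
    apply one_div_lt_one_div_of_lt (by positivity)
    have h12 : 12 ≤ 3 * exp 1 ^ 2 * √6 := by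
      nlinarith [mul_le_mul he he (by norm_num) (by positivity)]
    nlinarith
  have hmiddle : binomPMF n (1 / 2) (n / 2) ≤ prGT n (1 / 2) (Uhalf n) :=
    single_le_sum (fun k _ => binomPMF_half_nonneg n k) (mem_Icc.mpr ⟨by omega, by omega⟩)
  linarith [inv_succ_le_binomPMF_half_middle n, prGT_Uhalf_le n]

lemma exp_neg_six_le : exp (-6) ≤ 1 / (3 * exp 1 ^ 2 * √6) := by
  have he : 2 ≤ exp 1 := by linarith [add_one_le_exp 1]
  have h6 : √6 ≤ 3 := Real.sqrt_le_iff.mpr ⟨by norm_num, by norm_num⟩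
  have h16 : 2 ^ 4 ≤ exp 1 ^ 4 := by gcongr
  have h6' : exp 6 = exp 1 ^ 6 := by rw [exp_one_pow]; norm_num
  rw [exp_neg, ← one_div, h6']
  apply one_div_le_one_div_of_le (by positivity)
  rw [show exp 1 ^ 6 = exp 1 ^ 2 * exp 1 ^ 4 by ring]
  nlinarith [pow_pos (exp_pos 1) 2]

lemma Uhalf_le_half_add {n : ℕ} (hn : 0 < n) (s : ℕ)
    (hs : (2 * log n + 6) * (n + 1) ≤ s * (s + 1)) : Uhalf n ≤ n / 2 + s := by
  have hn' : (0 : ℝ) < n := by exact_mod_cast hn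
  apply Uhalf_le_of_prGT_le
  calc prGT n (1 / 2) (n / 2 + s) ≤ n * binomPMF n (1 / 2) (n / 2 + (s + 1)) :=
        prGT_le_mul_binomPMF_half_succ (by omega)
    _ ≤ n * exp (-(2 * log n + 6)) := by
        gcongr
        refine (binomPMF_half_add_le_exp n (s + 1)).trans (exp_le_exp.mpr ?_)
        rw [div_le_iff₀ (by positivity)]
        push_cast
        linarith
    _ = exp (-6) / n := by
        rw [show -(2 * log n + 6) = -6 - log ((n : ℝ) ^ 2) by rw [log_pow]; push_cast; ring,
          exp_sub, exp_log (by positivity)]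
        field_simp
    _ ≤ 1 / (3 * exp 1 ^ 2 * n * √6) := by
        rw [div_le_iff₀ hn',
          show 1 / (3 * exp 1 ^ 2 * n * √6) * n = 1 / (3 * exp 1 ^ 2 * √6) by field_simp]
        exact exp_neg_six_le

lemma le_pow_mul_of_le_mul_succ {f : ℕ → ℝ} {r : ℝ} (hr : 0 ≤ r) {c m : ℕ}
    (hf : ∀ i < m, f (c + i) ≤ r * f (c + i + 1)) : f c ≤ r ^ m * f (c + m) := by
  induction m with
  | zero => simp
  | succ m ih =>
    calc f c ≤ r ^ m * f (c + m) := ih fun i hi => hf i (by omega)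
      _ ≤ r ^ m * (r * f (c + m + 1)) := by gcongr; exact hf m m.lt_succ_self
      _ = r ^ (m + 1) * f (c + (m + 1)) := by rw [pow_succ, ← add_assoc]; ring

lemma binomPMF_half_le_mul_succ {n k : ℕ} {r : ℝ} (hkn : k < n)
    (hk : (k + 1 : ℝ) ≤ r * (n - k)) :
    binomPMF n (1 / 2) k ≤ r * binomPMF n (1 / 2) (k + 1) := by
  have hnk : (0 : ℝ) < n - k := sub_pos.mpr (by exact_mod_cast hkn)
  refine le_of_mul_le_mul_right ?_ hnk
  rw [← binomPMF_half_succ_mul]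
  calc binomPMF n (1 / 2) (k + 1) * (k + 1) ≤ binomPMF n (1 / 2) (k + 1) * (r * (n - k)) :=
        mul_le_mul_of_nonneg_left hk (binomPMF_half_nonneg _ _)
    _ = _ := by ring

lemma binomPMF_half_le_exp_one_mul {n : ℕ} (c m d : ℕ) (hcm : c + m ≤ n / 2 + d)
    (hd : 2 * d * (2 * m + 1) < n) :
    binomPMF n (1 / 2) c ≤ exp 1 * binomPMF n (1 / 2) (c + m) := by
  have hdn : 2 * d < n := (Nat.le_mul_of_pos_right (2 * d) (by omega)).trans_lt hd
  have hd' : (2 * d : ℝ) * (2 * m + 1) < n := by exact_mod_cast hd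
  have hhalf : ((n / 2 : ℕ) : ℝ) ≤ n / 2 := Nat.cast_div_le
  have hgap : (0 : ℝ) < n - 2 * d := by
    nlinarith [(d.cast_nonneg : (0 : ℝ) ≤ d), (m.cast_nonneg : (0 : ℝ) ≤ m)]
  -- `r * (n/2 - d) = n/2 + d`, so `r` bounds `(k + 1)/(n - k)` for every `k < n/2 + d`
  set r : ℝ := (n + 2 * d) / (n - 2 * d)
  have hr : 0 ≤ r := div_nonneg (by positivity) hgap.le
  have hstep : ∀ i < m, binomPMF n (1 / 2) (c + i) ≤ r * binomPMF n (1 / 2) (c + i + 1) := by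
    intro i hi
    have hci : ((c + i : ℕ) : ℝ) + 1 ≤ n / 2 + d := by
      have : ((c + i + 1 : ℕ) : ℝ) ≤ ((n / 2 + d : ℕ) : ℝ) := by exact_mod_cast (by omega)
      push_cast at this ⊢
      linarith
    refine binomPMF_half_le_mul_succ (by omega) (hci.trans ?_)
    calc (n : ℝ) / 2 + d = r * (n / 2 - d) := by simp only [r]; field_simp
      _ ≤ r * (n - (c + i : ℕ)) := mul_le_mul_of_nonneg_left (by linarith) hr
  have hrm : r ^ m ≤ exp 1 := by
    have hr1 : r ≤ exp (4 * d / (n - 2 * d)) := by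
      calc r = 4 * d / (n - 2 * d) + 1 := by simp only [r]; field_simp; ring
        _ ≤ _ := add_one_le_exp _
    calc r ^ m ≤ exp (4 * d / (n - 2 * d)) ^ m := pow_le_pow_left₀ hr hr1 m
      _ = exp (4 * d * m / (n - 2 * d)) := by rw [← exp_nat_mul]; ring_nf
      _ ≤ exp 1 := exp_le_exp.mpr ((div_le_one hgap).mpr (by linarith))
  calc binomPMF n (1 / 2) c ≤ r ^ m * binomPMF n (1 / 2) (c + m) :=
        le_pow_mul_of_le_mul_succ hr hstep
    _ ≤ exp 1 * binomPMF n (1 / 2) (c + m) := by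
        gcongr; exact binomPMF_half_nonneg _ _

lemma le_log_of_million_le {x : ℝ} (hx : 10 ^ 6 ≤ x) : 12.4 ≤ log x := by
  have h2 : 0.69 < log 2 := by linarith [log_two_gt_d9]
  calc (12.4 : ℝ) ≤ 18 * log 2 := by linarith
    _ = log (2 ^ 18) := by rw [log_pow]; norm_num
    _ ≤ log x := log_le_log (by positivity) (by linarith)

lemma log_le_of_million_le {x : ℝ} (hx : 10 ^ 6 ≤ x) : log x ≤ 14e-6 * x := by
  have he : exp 1 ≤ 10 ^ 6 := by linarith [exp_one_lt_d9]
  have hmillion : log (10 ^ 6) ≤ 14 := by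
    have h14 : exp 14 = exp 1 ^ 14 := by rw [exp_one_pow]; norm_num
    rw [log_le_iff_le_exp (by positivity), h14]
    calc (10 : ℝ) ^ 6 ≤ 2.7 ^ 14 := by norm_num
      _ ≤ exp 1 ^ 14 := by gcongr; linarith [exp_one_gt_d9]
  have hratio : log x / x ≤ log (10 ^ 6) / 10 ^ 6 :=
    log_div_self_antitoneOn (Set.mem_Ici.mpr he) (Set.mem_Ici.mpr (he.trans hx)) hx
  rw [div_le_iff₀ (by positivity)] at hratio
  refine hratio.trans (mul_le_mul_of_nonneg_right ?_ (by positivity))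
  rw [div_le_iff₀ (by positivity)]
  norm_num at hmillion ⊢
  exact hmillion

lemma exists_tail_offset_and_window {n : ℕ} (hn : 10 ^ 6 ≤ n) :
    ∃ s m : ℕ, (2 * log n + 6) * (n + 1) ≤ s * (s + 1) ∧ 2 * (s + m) * (2 * m + 1) < n ∧
      √n ≤ 8 * √(log n) * m := by
  have hn' : (10 : ℝ) ^ 6 ≤ n := by exact_mod_cast hn
  set L := log (n : ℝ)
  have hL : 12.4 ≤ L := le_log_of_million_le hn'
  have hLn : L ≤ 14e-6 * n := log_le_of_million_le hn'
  set S := √((2 * L + 6) * (n + 1))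
  set B := √n / (8 * √L)
  have hS0 : 0 ≤ S := sqrt_nonneg _
  have hB0 : 0 ≤ B := by positivity
  have hS2 : S ^ 2 = (2 * L + 6) * (n + 1) := sq_sqrt (by positivity)
  have hB2 : B ^ 2 * (64 * L) = n := by
    rw [div_pow, mul_pow, sq_sqrt (by positivity), sq_sqrt (by positivity)]
    field_simp
    norm_num
  have hS : S ≤ 0.006 * n := by
    rw [← pow_le_pow_iff_left₀ hS0 (by positivity) two_ne_zero, hS2]
    nlinarith
  have hSB : S * B ≤ n / 5 := by
    rw [← pow_le_pow_iff_left₀ (by positivity) (by positivity) two_ne_zero]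
    nlinarith
  have hB : B ^ 2 ≤ n / 793 := by nlinarith
  refine ⟨⌈S⌉₊, ⌈B⌉₊, ?_, ?_, ?_⟩
  · have hs := Nat.le_ceil S
    nlinarith
  · have hs := (Nat.ceil_lt_add_one hS0).le
    have hm := (Nat.ceil_lt_add_one hB0).le
    suffices (2 * (⌈S⌉₊ + ⌈B⌉₊) * (2 * ⌈B⌉₊ + 1) : ℝ) < n by exact_mod_cast this
    calc (2 * (⌈S⌉₊ + ⌈B⌉₊) * (2 * ⌈B⌉₊ + 1) : ℝ)
        ≤ 2 * (S + 1 + (B + 1)) * (2 * (B + 1) + 1) := by gcongr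
      _ < n := by nlinarith [sq_nonneg (B - 7)]
  · have hL0 : 0 < √L := sqrt_pos.mpr (by linarith)
    calc √n = 8 * √L * B := by simp only [B]; field_simp
      _ ≤ 8 * √L * ⌈B⌉₊ := by gcongr; exact Nat.le_ceil B

/-- For `n ≥ 10^6` and `B ~ Bin(n, 1/2)`, with `U` the smallest integer `c` such that
`Pr[B > c] ≤ 1/(3·e²·n·√6)`, it holds that `Pr[B = U] ≤ (8/(3·e·√6))·√(ln n)/n^(3/2)`. -/
theorem stmt_15 (n : ℕ) (hn : 10 ^ 6 ≤ n) :
    binomPMF n (1 / 2) (Uhalf n)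
      ≤ (8 / (3 * Real.exp 1 * Real.sqrt 6))
          * Real.sqrt (Real.log n) / (n : ℝ) ^ ((3 : ℝ) / 2) := by
  obtain ⟨s, m, hs, hsm, hm⟩ := exists_tail_offset_and_window hn
  have hn0 : 0 < n := by omega
  have hU : Uhalf n ≤ n / 2 + s := Uhalf_le_half_add hn0 s hs
  have hpeak : binomPMF n (1 / 2) (Uhalf n) ≤ exp 1 * binomPMF n (1 / 2) (Uhalf n + m) :=
    binomPMF_half_le_exp_one_mul _ m (s + m) (by omega) hsm
  have htail : m * binomPMF n (1 / 2) (Uhalf n + m) ≤ 1 / (3 * exp 1 ^ 2 * n * √6) :=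
    (mul_binomPMF_half_le_prGT (le_two_mul_Uhalf_add_one hn0) m).trans (prGT_Uhalf_le n)
  have hsqrt : 0 < √(n : ℝ) := sqrt_pos.mpr (by exact_mod_cast hn0)
  have hm0 : (0 : ℝ) < m := by
    by_contra! h
    nlinarith [sqrt_nonneg (log n)]
  have hpow : (n : ℝ) ^ ((3 : ℝ) / 2) = n * √n := by
    rw [show (3 : ℝ) / 2 = 1 + 1 / 2 by norm_num, rpow_add (by positivity), rpow_one,
      sqrt_eq_rpow]
  rw [hpow]
  calc binomPMF n (1 / 2) (Uhalf n)
      ≤ exp 1 * (1 / (3 * exp 1 ^ 2 * n * √6) / m) := by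
        refine hpeak.trans (mul_le_mul_of_nonneg_left ?_ (exp_pos 1).le)
        rwa [le_div_iff₀ hm0, mul_comm]
    _ = 1 / (3 * exp 1 * √6 * n) * (1 / m) := by field_simp
    _ ≤ 1 / (3 * exp 1 * √6 * n) * (8 * √(log n) / √n) := by
        refine mul_le_mul_of_nonneg_left ?_ (by positivity)
        rw [div_le_div_iff₀ hm0 hsqrt]
        linarith
    _ = _ := by field_simp
end

section
/- Consider two nodes u, v; a nomination profile is a pair (x_{uv}, x_{vu}) ∈ {0,1}², and in the uniform prior with popularity p ∈ [0,1] each of the two edges is present independently with probability p. Let f be a randomized impartial selection mechanism, i.e., an assignment of probabilities q_u(x), q_v(x) ≥ 0 with q_u(x) + q_v(x) ≤ 1 to each profile x, such that q_u(x) does not depend on x_{uv} and q_v(x) does not depend on x_{vu}. Then the expected in-degree of the winner satisfies E[d_{f(x)}(x)] ≤ p (counting in-degree 0 when no winner is returned). Consequently, since E[Δ(x)] = 2p − p², the approximation ratio E[Δ(x)]/E[d_{f(x)}(x)] is at least 2 − p; hence for every ε > 0, no impartial selection mechanism has approximation ratio better than 2 − ε against all uniform priors. -/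
/-- Probability of the two-node profile `x = (x_uv, x_vu)` under the uniform prior
with popularity `p`: each of the two edges is present independently with
probability `p`. -/
noncomputable def twoProb (p : ℝ) (x : Bool × Bool) : ℝ :=
  (if x.1 then p else 1 - p) * (if x.2 then p else 1 - p)

/-- Expected in-degree of the winner of a randomized mechanism that selects `u`
with probability `qu x` and `v` with probability `qv x` on the profile
`x = (x_uv, x_vu)` (the in-degree of `u` is `x_vu` and that of `v` is `x_uv`;
in-degree `0` is counted when no winner is returned). -/
noncomputable def winE (p : ℝ) (qu qv : Bool × Bool → ℝ) : ℝ :=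
  ∑ x : Bool × Bool,
    twoProb p x * (qu x * (if x.2 then 1 else 0) + qv x * (if x.1 then 1 else 0))

/-- Expected maximum in-degree `E[Δ(x)]` on two nodes under the uniform prior. -/
noncomputable def maxE (p : ℝ) : ℝ :=
  ∑ x : Bool × Bool, twoProb p x * (if x.1 || x.2 then 1 else 0)

lemma winE_eq (p : ℝ) (qu qv : Bool × Bool → ℝ)
    (hu : ∀ a a' b, qu (a, b) = qu (a', b)) (hv : ∀ a b b', qv (a, b) = qv (a, b')) :
    winE p qu qv = p * (qu (true, true) + qv (true, true)) := by
  have h1 : qu (false, true) = qu (true, true) := hu false true true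
  have h2 : qv (true, false) = qv (true, true) := hv true false true
  simp only [winE, twoProb, Fintype.sum_prod_type, Fintype.sum_bool]
  simp [h1, h2]
  ring

lemma maxE_eq (p : ℝ) : maxE p = 2 * p - p ^ 2 := by
  simp only [maxE, twoProb, Fintype.sum_prod_type, Fintype.sum_bool]
  simp
  ring

/-- On two nodes: every impartial randomized selection mechanism (`qu` does not
depend on `u`'s vote `x_uv`, `qv` does not depend on `v`'s vote `x_vu`) has
expected winner in-degree at most `p` under the uniform prior with popularity
`p ∈ [0,1]`; consequently (as `E[Δ(x)] = 2p − p²`) its approximation ratio is at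
least `2 − p`, and for every `ε > 0` no impartial mechanism has approximation
ratio better than `2 − ε` against all uniform priors. -/
theorem stmt_19 :
    (∀ p : ℝ, 0 ≤ p → p ≤ 1 → ∀ qu qv : Bool × Bool → ℝ,
      (∀ x, 0 ≤ qu x) → (∀ x, 0 ≤ qv x) → (∀ x, qu x + qv x ≤ 1) →
      (∀ a a' b, qu (a, b) = qu (a', b)) → (∀ a b b', qv (a, b) = qv (a, b')) →
      winE p qu qv ≤ p) ∧
    (∀ p : ℝ, 0 ≤ p → p ≤ 1 → maxE p = 2 * p - p ^ 2) ∧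
    (∀ p : ℝ, 0 ≤ p → p ≤ 1 → ∀ qu qv : Bool × Bool → ℝ,
      (∀ x, 0 ≤ qu x) → (∀ x, 0 ≤ qv x) → (∀ x, qu x + qv x ≤ 1) →
      (∀ a a' b, qu (a, b) = qu (a', b)) → (∀ a b b', qv (a, b) = qv (a, b')) →
      (2 - p) * winE p qu qv ≤ maxE p) ∧
    (∀ ε : ℝ, 0 < ε → ∃ p : ℝ, 0 ≤ p ∧ p ≤ 1 ∧
      ∀ qu qv : Bool × Bool → ℝ,
      (∀ x, 0 ≤ qu x) → (∀ x, 0 ≤ qv x) → (∀ x, qu x + qv x ≤ 1) →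
      (∀ a a' b, qu (a, b) = qu (a', b)) → (∀ a b b', qv (a, b) = qv (a, b')) →
      (2 - ε) * winE p qu qv ≤ maxE p) := by
  have key : ∀ p : ℝ, 0 ≤ p → p ≤ 1 → ∀ qu qv : Bool × Bool → ℝ,
      (∀ x, 0 ≤ qu x) → (∀ x, 0 ≤ qv x) → (∀ x, qu x + qv x ≤ 1) →
      (∀ a a' b, qu (a, b) = qu (a', b)) → (∀ a b b', qv (a, b) = qv (a, b')) →
      winE p qu qv ≤ p := by
    intro p hp0 hp1 qu qv hqu hqv hsum hu hv
    rw [winE_eq p qu qv hu hv]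
    calc p * (qu (true, true) + qv (true, true)) ≤ p * 1 :=
          mul_le_mul_of_nonneg_left (hsum _) hp0
      _ = p := mul_one p
  have keyge : ∀ p : ℝ, 0 ≤ p → ∀ qu qv : Bool × Bool → ℝ,
      (∀ x, 0 ≤ qu x) → (∀ x, 0 ≤ qv x) →
      (∀ a a' b, qu (a, b) = qu (a', b)) → (∀ a b b', qv (a, b) = qv (a, b')) →
      0 ≤ winE p qu qv := by
    intro p hp0 qu qv hqu hqv hu hv
    rw [winE_eq p qu qv hu hv]
    exact mul_nonneg hp0 (add_nonneg (hqu _) (hqv _))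
  refine ⟨key, fun p _ _ => maxE_eq p, ?_, ?_⟩
  · intro p hp0 hp1 qu qv hqu hqv hsum hu hv
    have h := key p hp0 hp1 qu qv hqu hqv hsum hu hv
    have h0 := keyge p hp0 qu qv hqu hqv hu hv
    rw [maxE_eq]
    nlinarith
  · intro ε hε
    refine ⟨min ε 1, le_min hε.le zero_le_one |>.trans (le_refl _) |>.trans (le_refl _), min_le_right ε 1, ?_⟩
    intro qu qv hqu hqv hsum hu hv
    set p := min ε 1 with hpdef
    have hp0 : 0 ≤ p := le_min hε.le zero_le_one
    have hp1 : p ≤ 1 := min_le_right ε 1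
    have hpe : p ≤ ε := min_le_left ε 1
    have h := key p hp0 hp1 qu qv hqu hqv hsum hu hv
    have h0 := keyge p hp0 qu qv hqu hqv hu hv
    rw [maxE_eq]
    nlinarith
end
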